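/- arXiv:math/9901037 — 2 statements merged into one kernel-verified Lean document; each statement's English description precedes it below -/
import Mathlib

section
/- Let λ be a partition with |λ| = N and S a standard tableau of shape λ. Let ev denote the Schützenberger evacuation involution on standard tableaux of shape λ. Then for all 1 ≤ i ≤ j ≤ N, P(S^{ev}|_{[i,j]} − (i−1)) = P(S|_{[N+1−j, N+1−i]} − (N−j))^{ev}. -/
namespace KSS

/-- Schensted row insertion of `x` into a row: returns new row and bumped entry. -/
def rowInsert (x : ℕ) : List ℕ → List ℕ × Option ℕ
  | [] => ([x], none)
  | y :: ys =>
    if x < y then (x :: ys, some y)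
    else
      let p := rowInsert x ys
      (y :: p.1, p.2)

/-- Insert a letter into a tableau (list of rows) by Schensted insertion. -/
def insertTab : List (List ℕ) → ℕ → List (List ℕ)
  | [], x => [[x]]
  | r :: rs, x =>
    match rowInsert x r with
    | (r', none) => r' :: rs
    | (r', some y) => r' :: insertTab rs y

/-- The Schensted `P`-tableau of a word. -/
def Ptab (w : List ℕ) : List (List ℕ) := w.foldl insertTab []

/-- Row-reading word of a tableau (bottom row first). -/
def word (T : List (List ℕ)) : List ℕ := T.reverse.flatten

def shape (T : List (List ℕ)) : List ℕ := T.map List.length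

def numEntries (T : List (List ℕ)) : ℕ := T.flatten.length

/-- `lam` is a partition (weakly decreasing list of positive integers). -/
def IsPartitionL (lam : List ℕ) : Prop :=
  List.Chain' (fun a b => b ≤ a) lam ∧ ∀ x ∈ lam, 0 < x

/-- Columns strictly increase downwards. -/
def colStrict (T : List (List ℕ)) : Prop :=
  ∀ i j, j < (T.getD (i+1) []).length → (T.getD i []).getD j 0 < (T.getD (i+1) []).getD j 0

/-- Standard tableau of shape `lam` with entries `a, a+1, …, a + |lam| - 1`. -/
def IsStdTabFrom (lam : List ℕ) (a : ℕ) (T : List (List ℕ)) : Prop :=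
  shape T = lam ∧ T.flatten.Perm (List.range' a lam.sum) ∧
    (∀ r ∈ T, List.Chain' (· < ·) r) ∧ colStrict T

/-- Standard tableau of shape `lam` with entries `1, …, |lam|`. -/
def IsStdTab (lam : List ℕ) (T : List (List ℕ)) : Prop := IsStdTabFrom lam 1 T

/-- `P(T|_{[a,b]} - (a-1))`: restrict to the letters in `[a,b]`, subtract `a-1`,
and rectify (computed on the reading word). -/
def resP (T : List (List ℕ)) (a b : ℕ) : List (List ℕ) :=
  Ptab (((word T).filter (fun x => decide (a ≤ x ∧ x ≤ b))).map (fun x => x - (a-1)))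

/-- `S ↦ S^D = P(S|_{[2,N]} - 1)`. -/
def Dmap (T : List (List ℕ)) : List (List ℕ) := resP T 2 (numEntries T)

/-- `S ↦ S⁻`, removal of the maximal letter. -/
def minusT (T : List (List ℕ)) : List (List ℕ) := resP T 1 (numEntries T - 1)

/-- (0-based) row index of the row of `T` containing the letter `x`. -/
def rowOf (T : List (List ℕ)) (x : ℕ) : ℕ := T.findIdx (fun r => r.contains x)

/-- (0-based) column index of the letter `x` in `T`. -/
def colOf (T : List (List ℕ)) (x : ℕ) : ℕ :=
  (T.getD (rowOf T x) []).findIdx (fun y => y == x)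

/-- The (0-based) row index of the unique cell of `big/small` (a skew shape with one cell). -/
def diffRow (big small : List ℕ) : ℕ :=
  (List.range (big.length + 1)).findIdx (fun i => decide (small.getD i 0 < big.getD i 0))

/-- Schützenberger evacuation, via `S^ev = P(# word(S))` where `#` is the
reverse complement in the alphabet `[1,N]`. -/
def evacT (T : List (List ℕ)) : List (List ℕ) :=
  Ptab (((word T).map (fun x => numEntries T + 1 - x)).reverse)
-- ===== Part 1: rowInsert basic lemmas =====

theorem rowInsert_ge (v : ℕ) (r : List ℕ) (h : ∀ e ∈ r, e < v) :
    rowInsert v r = (r ++ [v], none) := by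
  induction r with
  | nil => rfl
  | cons y ys ih =>
    have hy : y < v := h y (by simp)
    simp only [rowInsert, if_neg (by omega : ¬ v < y)]
    rw [ih (fun e he => h e (by simp [he]))]; rfl

theorem rowInsert_lt (v b : ℕ) (A C : List ℕ) (hA : ∀ e ∈ A, e < v) (hb : v < b) :
    rowInsert v (A ++ b :: C) = (A ++ v :: C, some b) := by
  induction A with
  | nil => simp [rowInsert, if_pos hb]
  | cons a A' ih =>
    have ha : a < v := hA a (by simp)
    simp only [List.cons_append, rowInsert, if_neg (by omega : ¬ v < a)]
    rw [ih (fun e he => hA e (by simp [he]))]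

theorem rowInsert_none (v : ℕ) (r r' : List ℕ) (h : rowInsert v r = (r', none)) :
    r' = r ++ [v] ∧ ∀ e ∈ r, ¬ v < e := by
  induction r generalizing r' with
  | nil => simp [rowInsert] at h; simp [h.symm]
  | cons y ys ih =>
    by_cases hy : v < y
    · simp [rowInsert, if_pos hy] at h
    · simp only [rowInsert, if_neg hy] at h
      injection h with h1 h2
      have := ih (r' := (rowInsert v ys).1) (by rw [← h2])
      refine ⟨by rw [← h1, this.1]; rfl, ?_⟩
      intro e he; rcases List.mem_cons.1 he with rfl | he'
      · exact hy
      · exact this.2 e he'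

theorem rowInsert_some (v b : ℕ) (r r' : List ℕ) (h : rowInsert v r = (r', some b)) :
    ∃ A C, r = A ++ b :: C ∧ r' = A ++ v :: C ∧ (∀ e ∈ A, ¬ v < e) ∧ v < b := by
  induction r generalizing r' with
  | nil => simp [rowInsert] at h
  | cons y ys ih =>
    by_cases hy : v < y
    · simp only [rowInsert, if_pos hy, Prod.mk.injEq, Option.some.injEq] at h
      exact ⟨[], ys, by simp [h.2.symm], by simp [h.1.symm], by simp, h.2 ▸ hy⟩
    · simp only [rowInsert, if_neg hy] at h
      injection h with h1 h2
      obtain ⟨A, C, g1, g2, g3, g4⟩ := ih (r' := (rowInsert v ys).1) (by rw [← h2])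
      refine ⟨y :: A, C, by simp [g1], by simp [← h1, g2], ?_, g4⟩
      intro e he; rcases List.mem_cons.1 he with rfl | he'
      · exact hy
      · exact g3 e he'

-- ===== Part 2: goodness preservation =====

def GoodT (T : List (List ℕ)) : Prop :=
  (∀ r ∈ T, List.Chain' (· < ·) r) ∧ T.flatten.Nodup

theorem insertTab_nil (x : ℕ) : insertTab [] x = [[x]] := rfl

theorem insertTab_eq_none {x : ℕ} {r r' : List ℕ} {rs : List (List ℕ)}
    (h : rowInsert x r = (r', none)) : insertTab (r :: rs) x = r' :: rs := by
  unfold insertTab; rw [h]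

theorem insertTab_eq_some {x y : ℕ} {r r' : List ℕ} {rs : List (List ℕ)}
    (h : rowInsert x r = (r', some y)) : insertTab (r :: rs) x = r' :: insertTab rs y := by
  conv_lhs => unfold insertTab
  rw [h]

theorem rowInsert_spec (v : ℕ) (r : List ℕ) (hs : List.Chain' (· < ·) r) (hv : v ∉ r) :
    List.Chain' (· < ·) (rowInsert v r).1 ∧
    ((rowInsert v r).1 ++ (rowInsert v r).2.toList).Perm (v :: r) ∧
    (∀ b, (rowInsert v r).2 = some b → v < b) := by
  simp only [List.Chain', List.isChain_iff_pairwise] at hs ⊢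
  match h : rowInsert v r with
  | (r', none) =>
    obtain ⟨h1, h2⟩ := rowInsert_none v r r' h
    have hlt : ∀ e ∈ r, e < v := by
      intro e he
      have h3 := h2 e he
      have : e ≠ v := fun hh => hv (hh ▸ he)
      omega
    subst h1
    refine ⟨?_, by simpa using (List.perm_append_comm (l₁ := r) (l₂ := [v])), by simp⟩
    rw [List.pairwise_append]
    exact ⟨hs, by simp, by simpa using hlt⟩
  | (r', some b) =>
    obtain ⟨A, C, h1, h2, h3, h4⟩ := rowInsert_some v b r r' h
    subst h1 h2
    rw [List.pairwise_append] at hs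
    obtain ⟨hA, hbC, hcross⟩ := hs
    have hAv : ∀ e ∈ A, e < v := by
      intro e he
      have h5 := h3 e he
      have : e ≠ v := fun hh => hv (hh ▸ List.mem_append_left _ he)
      omega
    have hCb : ∀ c ∈ C, b < c := fun c hc => (List.pairwise_cons.1 hbC).1 c hc
    refine ⟨?_, ?_, by intro b' hb'; simp at hb'; omega⟩
    · rw [List.pairwise_append]
      refine ⟨hA, ?_, ?_⟩
      · rw [List.pairwise_cons]
        exact ⟨fun c hc => lt_trans h4 (hCb c hc), (List.pairwise_cons.1 hbC).2⟩
      · intro a ha e he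
        rcases List.mem_cons.1 he with rfl | he'
        · exact hAv a ha
        · exact hcross a ha e (by simp [he'])
    · -- (A ++ v :: C) ++ [b]  ~  v :: (A ++ b :: C)
      have e1 : ((A ++ v :: C, some b).1 ++ (A ++ v :: C, some b).2.toList : List ℕ)
          = A ++ v :: (C ++ [b]) := by simp
      rw [e1]
      refine List.Perm.trans List.perm_middle ?_
      exact ((List.Perm.append_left A (List.perm_append_comm (l₁ := C) (l₂ := [b]))).cons v)

theorem insertTab_spec (T : List (List ℕ)) (x : ℕ) (hT : GoodT T) (hx : x ∉ T.flatten) :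
    GoodT (insertTab T x) ∧ (insertTab T x).flatten.Perm (x :: T.flatten) := by
  induction T generalizing x with
  | nil =>
    rw [insertTab_nil]
    refine ⟨⟨?_, by simp⟩, by simp⟩
    intro row hrow
    simp at hrow
    simp [hrow]; exact List.isChain_singleton x
  | cons r rs ih =>
    obtain ⟨hrows, hnd⟩ := hT
    have hxr : x ∉ r := fun h => hx (by simp [h])
    have hxf : x ∉ rs.flatten := fun h => hx (by simp [h])
    have hnd' : (r ++ rs.flatten).Nodup := by simpa using hnd
    have hndf : rs.flatten.Nodup := (List.nodup_append.1 hnd').2.1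
    have hdisj : ∀ a ∈ r, a ∉ rs.flatten :=
      fun a ha hb => (List.nodup_append.1 hnd').2.2 a ha a hb rfl
    obtain ⟨hs1, hs2, hs3⟩ := rowInsert_spec x r (hrows r (by simp)) hxr
    match h : rowInsert x r with
    | (r', none) =>
      rw [h] at hs1 hs2
      simp only [Option.toList, List.append_nil] at hs2
      have hs1' : List.Chain' (· < ·) r' := hs1
      have hs2' : r'.Perm (x :: r) := hs2
      have hperm : (r' ++ rs.flatten).Perm (x :: (r ++ rs.flatten)) :=
        hs2'.append_right _
      rw [insertTab_eq_none h]
      refine ⟨⟨?_, ?_⟩, ?_⟩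
      · intro row hrow
        rcases List.mem_cons.1 hrow with rfl | hmem
        · exact hs1'
        · exact hrows row (by simp [hmem])
      · rw [List.flatten_cons]
        refine hperm.nodup_iff.2 ?_
        simp only [List.nodup_cons]
        exact ⟨by simpa using hx, hnd'⟩
      · rw [List.flatten_cons]
        simpa using hperm
    | (r', some y) =>
      rw [h] at hs1 hs2 hs3
      simp only [Option.toList] at hs2
      have hs1' : List.Chain' (· < ·) r' := hs1
      have hs2' : (r' ++ [y]).Perm (x :: r) := hs2
      have hxy : x < y := hs3 y rfl
      have hyr : y ∈ r := by
        have h6 : y ∈ x :: r := hs2'.mem_iff.1 (by simp)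
        rcases List.mem_cons.1 h6 with rfl | hm
        · omega
        · exact hm
      have hyf : y ∉ rs.flatten := hdisj y hyr
      obtain ⟨⟨ihr, ihn⟩, ihp⟩ := ih y ⟨fun row hrow => hrows row (by simp [hrow]), hndf⟩ hyf
      have hperm : (r' ++ (insertTab rs y).flatten).Perm (x :: (r ++ rs.flatten)) := by
        refine List.Perm.trans (ihp.append_left r') ?_
        have e1 : (r' ++ (y :: rs.flatten) : List ℕ) = (r' ++ [y]) ++ rs.flatten := by simp
        rw [e1]
        exact hs2'.append_right _
      rw [insertTab_eq_some h]
      refine ⟨⟨?_, ?_⟩, ?_⟩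
      · intro row hrow
        rcases List.mem_cons.1 hrow with rfl | hmem
        · exact hs1'
        · exact ihr row hmem
      · rw [List.flatten_cons]
        refine hperm.nodup_iff.2 ?_
        simp only [List.nodup_cons]
        exact ⟨by simpa using hx, hnd'⟩
      · rw [List.flatten_cons]
        simpa using hperm

theorem Ptab_append_singleton (w : List ℕ) (x : ℕ) :
    Ptab (w ++ [x]) = insertTab (Ptab w) x := by simp [Ptab]

theorem Ptab_spec (w : List ℕ) (hw : w.Nodup) :
    GoodT (Ptab w) ∧ (Ptab w).flatten.Perm w := by
  induction w using List.reverseRecOn with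
  | nil =>
    have h0 : Ptab ([] : List ℕ) = [] := rfl
    rw [h0]
    exact ⟨⟨by simp, by simp⟩, by simp⟩
  | append_singleton w x ih =>
    have hw' : w.Nodup := (List.nodup_append.1 hw).1
    have hxw : x ∉ w := fun hm => (List.nodup_append.1 hw).2.2 x hm x (by simp) rfl
    obtain ⟨hG, hP⟩ := ih hw'
    have hx : x ∉ (Ptab w).flatten := fun h => hxw (hP.mem_iff.1 h)
    rw [Ptab_append_singleton]
    obtain ⟨hG', hP'⟩ := insertTab_spec (Ptab w) x hG hx
    refine ⟨hG', ?_⟩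
    refine List.Perm.trans hP' ?_
    refine List.Perm.trans (hP.cons x) ?_
    simpa using (List.perm_append_comm (l₁ := [x]) (l₂ := w))

-- ===== Part 3: rowPass and decomposition =====

def rowPass : List ℕ → List ℕ → List ℕ × List ℕ
  | r, [] => (r, [])
  | r, a :: as =>
    let p := rowInsert a r
    let q := rowPass p.1 as
    (q.1, p.2.toList ++ q.2)

@[simp] theorem rowPass_nil (r : List ℕ) : rowPass r [] = (r, []) := rfl

theorem rowPass_cons (r : List ℕ) (a : ℕ) (as : List ℕ) :
    rowPass r (a :: as) =
      ((rowPass (rowInsert a r).1 as).1,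
        (rowInsert a r).2.toList ++ (rowPass (rowInsert a r).1 as).2) := rfl

theorem foldl_insertTab_cons (r : List ℕ) (rs : List (List ℕ)) (ws : List ℕ) :
    List.foldl insertTab (r :: rs) ws =
      (rowPass r ws).1 :: List.foldl insertTab rs (rowPass r ws).2 := by
  induction ws generalizing r rs with
  | nil => simp
  | cons a as ih =>
    rw [List.foldl_cons, rowPass_cons]
    match h : rowInsert a r with
    | (r', none) =>
      rw [insertTab_eq_none h, ih]
      simp
    | (r', some y) =>
      rw [insertTab_eq_some h, ih]
      simp

/-- Decompose a sorted row into blocks relative to `x < y < z` not in the row. -/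
theorem row_decomp (r : List ℕ) (x y z : ℕ) (hs : List.Chain' (· < ·) r)
    (hx : x ∉ r) (hy : y ∉ r) (hz : z ∉ r) :
    ∃ P Q R S : List ℕ, r = P ++ Q ++ R ++ S ∧
      (∀ e ∈ P, e < x) ∧ (∀ e ∈ Q, x < e ∧ e < y) ∧
      (∀ e ∈ R, y < e ∧ e < z) ∧ (∀ e ∈ S, z < e) := by
  rw [show List.Chain' (· < ·) r ↔ List.Pairwise (· < ·) r from List.isChain_iff_pairwise] at hs
  induction r with
  | nil => exact ⟨[], [], [], [], by simp, by simp, by simp, by simp, by simp⟩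
  | cons e r' ih =>
    have he : ∀ f ∈ r', e < f := (List.pairwise_cons.1 hs).1
    obtain ⟨P, Q, R, S, h1, h2, h3, h4, h5⟩ :=
      ih (List.pairwise_cons.1 hs).2 (fun h => hx (by simp [h]))
        (fun h => hy (by simp [h])) (fun h => hz (by simp [h]))
    have hex : e ≠ x := fun h => hx (by simp [h])
    have hey : e ≠ y := fun h => hy (by simp [h])
    have hez : e ≠ z := fun h => hz (by simp [h])
    rcases lt_trichotomy e x with h | h | h
    · exact ⟨e :: P, Q, R, S, by simp [h1], by
        intro f hf; rcases List.mem_cons.1 hf with rfl | hf'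
        · exact h
        · exact h2 f hf', h3, h4, h5⟩
    · omega
    rcases lt_trichotomy e y with h' | h' | h'
    · -- x < e < y : P must be empty
      have hP : P = [] := by
        rcases P with _ | ⟨p, P'⟩
        · rfl
        · exfalso
          have hp : e < p := he p (by rw [h1]; simp)
          have := h2 p (by simp)
          omega
      refine ⟨[], e :: Q, R, S, by simp [h1, hP], by simp, ?_, h4, h5⟩
      intro f hf; rcases List.mem_cons.1 hf with rfl | hf'
      · exact ⟨h, h'⟩
      · exact h3 f hf'
    · omega
    rcases lt_trichotomy e z with h'' | h'' | h''
    · -- y < e < z : P and Q must be empty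
      have hPQ : P = [] ∧ Q = [] := by
        constructor
        · rcases P with _ | ⟨p, P'⟩
          · rfl
          · exfalso
            have hp : e < p := he p (by rw [h1]; simp)
            have := h2 p (by simp)
            omega
        · rcases Q with _ | ⟨q, Q'⟩
          · rfl
          · exfalso
            have hq : e < q := he q (by rw [h1]; simp)
            have := h3 q (by simp)
            omega
      refine ⟨[], [], e :: R, S, by simp [h1, hPQ.1, hPQ.2], by simp, by simp, ?_, h5⟩
      intro f hf; rcases List.mem_cons.1 hf with rfl | hf'
      · exact ⟨h', h''⟩
      · exact h4 f hf'
    · omega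
    · -- z < e : P, Q, R must be empty
      have hPQR : P = [] ∧ Q = [] ∧ R = [] := by
        refine ⟨?_, ?_, ?_⟩
        · rcases P with _ | ⟨p, P'⟩
          · rfl
          · exfalso
            have hp : e < p := he p (by rw [h1]; simp)
            have := h2 p (by simp)
            omega
        · rcases Q with _ | ⟨q, Q'⟩
          · rfl
          · exfalso
            have hq : e < q := he q (by rw [h1]; simp)
            have := h3 q (by simp)
            omega
        · rcases R with _ | ⟨rr, R'⟩
          · rfl
          · exfalso
            have hr : e < rr := he rr (by rw [h1]; simp)
            have := h4 rr (by simp)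
            omega
      refine ⟨[], [], [], e :: S, by simp [h1, hPQR.1, hPQR.2.1, hPQR.2.2], by simp, by simp, by simp, ?_⟩
      intro f hf; rcases List.mem_cons.1 hf with rfl | hf'
      · exact h''
      · exact h5 f hf'

-- ===== Part 4: Knuth moves preserve insertion =====

def Kpat (L1 L2 : List ℕ) : Prop :=
  ∃ a b c : ℕ, a < b ∧ b < c ∧
    ((L1 = [a, c, b] ∧ L2 = [c, a, b]) ∨ (L1 = [c, a, b] ∧ L2 = [a, c, b]) ∨
     (L1 = [b, a, c] ∧ L2 = [b, c, a]) ∨ (L1 = [b, c, a] ∧ L2 = [b, a, c]))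

theorem rowInsert_ge' (v : ℕ) (row out : List ℕ) (hout : out = row ++ [v])
    (h : ∀ e ∈ row, e < v) : rowInsert v row = (out, none) := by
  subst hout; exact rowInsert_ge v row h

theorem rowInsert_lt'' (v b : ℕ) (A C row out : List ℕ) (hrow : row = A ++ b :: C)
    (hout : out = A ++ v :: C) (hA : ∀ e ∈ A, e < v) (hb : v < b) :
    rowInsert v row = (out, some b) := by
  subst hrow hout; exact rowInsert_lt v b A C hA hb

theorem rowPass3 {r r1 r2 r3 : List ℕ} {u1 u2 u3 : ℕ} {o1 o2 o3 : Option ℕ}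
    (h1 : rowInsert u1 r = (r1, o1)) (h2 : rowInsert u2 r1 = (r2, o2))
    (h3 : rowInsert u3 r2 = (r3, o3)) :
    rowPass r [u1, u2, u3] = (r3, o1.toList ++ (o2.toList ++ o3.toList)) := by
  rw [rowPass_cons, h1]
  dsimp only
  rw [rowPass_cons, h2]
  dsimp only
  rw [rowPass_cons, h3]
  simp

theorem pair_lt (P S : List ℕ) (u v : ℕ)
    (h : List.Pairwise (· < ·) (P ++ (u :: (v :: S)))) : u < v := by
  have h1 := (List.pairwise_append.1 h).2.1
  exact (List.pairwise_cons.1 h1).1 v (by simp)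

theorem pair_lt2 (P Q S : List ℕ) (w u v : ℕ)
    (h : List.Pairwise (· < ·) (P ++ (w :: (Q ++ (u :: (v :: S)))))) : u < v := by
  have h1 := (List.pairwise_append.1 h).2.1
  have h2 := (List.pairwise_cons.1 h1).2
  exact pair_lt Q S u v h2

theorem rowMain1 (r : List ℕ) (a b c : ℕ) (hab : a < b) (hbc : b < c)
    (hsrt : List.Chain' (· < ·) r) (hna : a ∉ r) (hnb : b ∉ r) (hnc : c ∉ r) :
    (rowPass r [a, c, b]).1 = (rowPass r [c, a, b]).1 ∧
    ((rowPass r [a, c, b]).2 = (rowPass r [c, a, b]).2 ∨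
      Kpat (rowPass r [a, c, b]).2 (rowPass r [c, a, b]).2) ∧
    (rowPass r [a, c, b]).2.Nodup ∧
    (∀ e ∈ (rowPass r [a, c, b]).2, e ∈ r ∨ e = a ∨ e = b ∨ e = c) := by
  have hsp : List.Pairwise (· < ·) r := List.isChain_iff_pairwise.mp hsrt
  obtain ⟨P, Q, R, S, hr, hP, hQ, hR, hS⟩ := row_decomp r a b c hsrt hna hnb hnc
  subst hr
  rcases Q with _ | ⟨q, Q'⟩
  · rcases R with _ | ⟨rr, R'⟩
    · rcases S with _ | ⟨s, S'⟩
      · simp only [List.nil_append, List.append_nil, List.cons_append, List.append_assoc] at hsp ⊢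
        have i1 : rowInsert a (P) = (P ++ [a], none) :=
          rowInsert_ge' a (P) (P ++ [a]) (by simp) (fun e he => by have hx := hP e he; omega)
        have bndi2 : ∀ e ∈ (P ++ [a]), e < c := by
          intro e he
          simp at he
          rcases he with h | rfl
          · have hx := hP e h; omega
          · omega
        have i2 : rowInsert c (P ++ [a]) = (P ++ [a, c], none) :=
          rowInsert_ge' c (P ++ [a]) (P ++ [a, c]) (by simp) bndi2
        have bndi3 : ∀ e ∈ (P ++ [a]), e < b := by
          intro e he
          simp at he
          rcases he with h | rfl
          · have hx := hP e h; omega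
          · omega
        have i3 : rowInsert b (P ++ [a, c]) = (P ++ [a, b], some c) :=
          rowInsert_lt'' b c (P ++ [a]) (([] : List ℕ)) (P ++ [a, c]) (P ++ [a, b]) (by simp) (by simp) bndi3 (by omega)
        have j1 : rowInsert c (P) = (P ++ [c], none) :=
          rowInsert_ge' c (P) (P ++ [c]) (by simp) (fun e he => by have hx := hP e he; omega)
        have j2 : rowInsert a (P ++ [c]) = (P ++ [a], some c) :=
          rowInsert_lt'' a c (P) (([] : List ℕ)) (P ++ [c]) (P ++ [a]) (by simp) (by simp) (fun e he => by have hx := hP e he; omega) (by omega)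
        have bndj3 : ∀ e ∈ (P ++ [a]), e < b := by
          intro e he
          simp at he
          rcases he with h | rfl
          · have hx := hP e h; omega
          · omega
        have j3 : rowInsert b (P ++ [a]) = (P ++ [a, b], none) :=
          rowInsert_ge' b (P ++ [a]) (P ++ [a, b]) (by simp) bndj3
        have EL : rowPass (P) [a, c, b] = (P ++ [a, b], [c]) := by
            rw [rowPass3 (h1 := i1) (h2 := i2) (h3 := i3)]
            rfl
        have ER : rowPass (P) [c, a, b] = (P ++ [a, b], [c]) := by
            rw [rowPass3 (h1 := j1) (h2 := j2) (h3 := j3)]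
            rfl
        rw [EL, ER]
        exact ⟨rfl, Or.inl rfl, by simp, by intro e he; simp at he; subst he; simp⟩
      · rcases S' with _ | ⟨s2, S''⟩
        · simp only [List.nil_append, List.append_nil, List.cons_append, List.append_assoc] at hsp ⊢
          have hhs := hS s (by simp)
          have i1 : rowInsert a (P ++ [s]) = (P ++ [a], some s) :=
            rowInsert_lt'' a s (P) (([] : List ℕ)) (P ++ [s]) (P ++ [a]) (by simp) (by simp) (fun e he => by have hx := hP e he; omega) (by omega)
          have bndi2 : ∀ e ∈ (P ++ [a]), e < c := by
            intro e he
            simp at he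
            rcases he with h | rfl
            · have hx := hP e h; omega
            · omega
          have i2 : rowInsert c (P ++ [a]) = (P ++ [a, c], none) :=
            rowInsert_ge' c (P ++ [a]) (P ++ [a, c]) (by simp) bndi2
          have bndi3 : ∀ e ∈ (P ++ [a]), e < b := by
            intro e he
            simp at he
            rcases he with h | rfl
            · have hx := hP e h; omega
            · omega
          have i3 : rowInsert b (P ++ [a, c]) = (P ++ [a, b], some c) :=
            rowInsert_lt'' b c (P ++ [a]) (([] : List ℕ)) (P ++ [a, c]) (P ++ [a, b]) (by simp) (by simp) bndi3 (by omega)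
          have j1 : rowInsert c (P ++ [s]) = (P ++ [c], some s) :=
            rowInsert_lt'' c s (P) (([] : List ℕ)) (P ++ [s]) (P ++ [c]) (by simp) (by simp) (fun e he => by have hx := hP e he; omega) (by omega)
          have j2 : rowInsert a (P ++ [c]) = (P ++ [a], some c) :=
            rowInsert_lt'' a c (P) (([] : List ℕ)) (P ++ [c]) (P ++ [a]) (by simp) (by simp) (fun e he => by have hx := hP e he; omega) (by omega)
          have bndj3 : ∀ e ∈ (P ++ [a]), e < b := by
            intro e he
            simp at he
            rcases he with h | rfl
            · have hx := hP e h; omega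
            · omega
          have j3 : rowInsert b (P ++ [a]) = (P ++ [a, b], none) :=
            rowInsert_ge' b (P ++ [a]) (P ++ [a, b]) (by simp) bndj3
          have EL : rowPass (P ++ [s]) [a, c, b] = (P ++ [a, b], [s, c]) := by
              rw [rowPass3 (h1 := i1) (h2 := i2) (h3 := i3)]
              rfl
          have ER : rowPass (P ++ [s]) [c, a, b] = (P ++ [a, b], [s, c]) := by
              rw [rowPass3 (h1 := j1) (h2 := j2) (h3 := j3)]
              rfl
          rw [EL, ER]
          exact ⟨rfl, Or.inl rfl, by simp; omega, by intro e he; simp at he; rcases he with rfl | rfl <;> simp⟩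
        · simp only [List.nil_append, List.append_nil, List.cons_append, List.append_assoc] at hsp ⊢
          have hhs := hS s (by simp)
          have hhs2 := hS s2 (by simp)
          have hss2 : s < s2 := pair_lt P S'' s s2 hsp
          have i1 : rowInsert a (P ++ (s :: (s2 :: S''))) = (P ++ (a :: (s2 :: S'')), some s) :=
            rowInsert_lt'' a s (P) (s2 :: S'') (P ++ (s :: (s2 :: S''))) (P ++ (a :: (s2 :: S''))) (by simp) (by simp) (fun e he => by have hx := hP e he; omega) (by omega)
          have bndi2 : ∀ e ∈ (P ++ [a]), e < c := by
            intro e he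
            simp at he
            rcases he with h | rfl
            · have hx := hP e h; omega
            · omega
          have i2 : rowInsert c (P ++ (a :: (s2 :: S''))) = (P ++ (a :: (c :: S'')), some s2) :=
            rowInsert_lt'' c s2 (P ++ [a]) (S'') (P ++ (a :: (s2 :: S''))) (P ++ (a :: (c :: S''))) (by simp) (by simp) bndi2 (by omega)
          have bndi3 : ∀ e ∈ (P ++ [a]), e < b := by
            intro e he
            simp at he
            rcases he with h | rfl
            · have hx := hP e h; omega
            · omega
          have i3 : rowInsert b (P ++ (a :: (c :: S''))) = (P ++ (a :: (b :: S'')), some c) :=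
            rowInsert_lt'' b c (P ++ [a]) (S'') (P ++ (a :: (c :: S''))) (P ++ (a :: (b :: S''))) (by simp) (by simp) bndi3 (by omega)
          have j1 : rowInsert c (P ++ (s :: (s2 :: S''))) = (P ++ (c :: (s2 :: S'')), some s) :=
            rowInsert_lt'' c s (P) (s2 :: S'') (P ++ (s :: (s2 :: S''))) (P ++ (c :: (s2 :: S''))) (by simp) (by simp) (fun e he => by have hx := hP e he; omega) (by omega)
          have j2 : rowInsert a (P ++ (c :: (s2 :: S''))) = (P ++ (a :: (s2 :: S'')), some c) :=
            rowInsert_lt'' a c (P) (s2 :: S'') (P ++ (c :: (s2 :: S''))) (P ++ (a :: (s2 :: S''))) (by simp) (by simp) (fun e he => by have hx := hP e he; omega) (by omega)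
          have bndj3 : ∀ e ∈ (P ++ [a]), e < b := by
            intro e he
            simp at he
            rcases he with h | rfl
            · have hx := hP e h; omega
            · omega
          have j3 : rowInsert b (P ++ (a :: (s2 :: S''))) = (P ++ (a :: (b :: S'')), some s2) :=
            rowInsert_lt'' b s2 (P ++ [a]) (S'') (P ++ (a :: (s2 :: S''))) (P ++ (a :: (b :: S''))) (by simp) (by simp) bndj3 (by omega)
          have EL : rowPass (P ++ (s :: (s2 :: S''))) [a, c, b] = (P ++ (a :: (b :: S'')), [s, s2, c]) := by
              rw [rowPass3 (h1 := i1) (h2 := i2) (h3 := i3)]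
              rfl
          have ER : rowPass (P ++ (s :: (s2 :: S''))) [c, a, b] = (P ++ (a :: (b :: S'')), [s, c, s2]) := by
              rw [rowPass3 (h1 := j1) (h2 := j2) (h3 := j3)]
              rfl
          rw [EL, ER]
          exact ⟨rfl, Or.inr ⟨c, s, s2, by omega, by omega, Or.inr (Or.inr (Or.inr ⟨rfl, rfl⟩))⟩, by simp; omega, by intro e he; simp at he; rcases he with rfl | rfl | rfl <;> simp⟩
    · rcases S with _ | ⟨s, S'⟩
      · rcases R' with _ | ⟨r2, R''⟩
        · simp only [List.nil_append, List.append_nil, List.cons_append, List.append_assoc] at hsp ⊢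
          have hhrr := hR rr (by simp)
          have i1 : rowInsert a (P ++ [rr]) = (P ++ [a], some rr) :=
            rowInsert_lt'' a rr (P) (([] : List ℕ)) (P ++ [rr]) (P ++ [a]) (by simp) (by simp) (fun e he => by have hx := hP e he; omega) (by omega)
          have bndi2 : ∀ e ∈ (P ++ [a]), e < c := by
            intro e he
            simp at he
            rcases he with h | rfl
            · have hx := hP e h; omega
            · omega
          have i2 : rowInsert c (P ++ [a]) = (P ++ [a, c], none) :=
            rowInsert_ge' c (P ++ [a]) (P ++ [a, c]) (by simp) bndi2
          have bndi3 : ∀ e ∈ (P ++ [a]), e < b := by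
            intro e he
            simp at he
            rcases he with h | rfl
            · have hx := hP e h; omega
            · omega
          have i3 : rowInsert b (P ++ [a, c]) = (P ++ [a, b], some c) :=
            rowInsert_lt'' b c (P ++ [a]) (([] : List ℕ)) (P ++ [a, c]) (P ++ [a, b]) (by simp) (by simp) bndi3 (by omega)
          have bndj1 : ∀ e ∈ (P ++ [rr]), e < c := by
            intro e he
            simp at he
            rcases he with h | rfl
            · have hx := hP e h; omega
            · omega
          have j1 : rowInsert c (P ++ [rr]) = (P ++ [rr, c], none) :=
            rowInsert_ge' c (P ++ [rr]) (P ++ [rr, c]) (by simp) bndj1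
          have j2 : rowInsert a (P ++ [rr, c]) = (P ++ [a, c], some rr) :=
            rowInsert_lt'' a rr (P) ([c]) (P ++ [rr, c]) (P ++ [a, c]) (by simp) (by simp) (fun e he => by have hx := hP e he; omega) (by omega)
          have bndj3 : ∀ e ∈ (P ++ [a]), e < b := by
            intro e he
            simp at he
            rcases he with h | rfl
            · have hx := hP e h; omega
            · omega
          have j3 : rowInsert b (P ++ [a, c]) = (P ++ [a, b], some c) :=
            rowInsert_lt'' b c (P ++ [a]) (([] : List ℕ)) (P ++ [a, c]) (P ++ [a, b]) (by simp) (by simp) bndj3 (by omega)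
          have EL : rowPass (P ++ [rr]) [a, c, b] = (P ++ [a, b], [rr, c]) := by
              rw [rowPass3 (h1 := i1) (h2 := i2) (h3 := i3)]
              rfl
          have ER : rowPass (P ++ [rr]) [c, a, b] = (P ++ [a, b], [rr, c]) := by
              rw [rowPass3 (h1 := j1) (h2 := j2) (h3 := j3)]
              rfl
          rw [EL, ER]
          exact ⟨rfl, Or.inl rfl, by simp; omega, by intro e he; simp at he; rcases he with rfl | rfl <;> simp⟩
        · simp only [List.nil_append, List.append_nil, List.cons_append, List.append_assoc] at hsp ⊢
          have hhrr := hR rr (by simp)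
          have hhr2 := hR r2 (by simp)
          have hRt2 : ∀ e ∈ R'', b < e ∧ e < c := fun e he => hR e (by simp [he])
          have hrr2 : rr < r2 := pair_lt P R'' rr r2 hsp
          have i1 : rowInsert a (P ++ (rr :: (r2 :: R''))) = (P ++ (a :: (r2 :: R'')), some rr) :=
            rowInsert_lt'' a rr (P) (r2 :: R'') (P ++ (rr :: (r2 :: R''))) (P ++ (a :: (r2 :: R''))) (by simp) (by simp) (fun e he => by have hx := hP e he; omega) (by omega)
          have bndi2 : ∀ e ∈ (P ++ (a :: (r2 :: R''))), e < c := by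
            intro e he
            simp at he
            rcases he with h | rfl | rfl | h
            · have hx := hP e h; omega
            · omega
            · omega
            · have hx := hRt2 e h; omega
          have i2 : rowInsert c (P ++ (a :: (r2 :: R''))) = (P ++ (a :: (r2 :: (R'' ++ [c]))), none) :=
            rowInsert_ge' c (P ++ (a :: (r2 :: R''))) (P ++ (a :: (r2 :: (R'' ++ [c])))) (by simp) bndi2
          have bndi3 : ∀ e ∈ (P ++ [a]), e < b := by
            intro e he
            simp at he
            rcases he with h | rfl
            · have hx := hP e h; omega
            · omega
          have i3 : rowInsert b (P ++ (a :: (r2 :: (R'' ++ [c])))) = (P ++ (a :: (b :: (R'' ++ [c]))), some r2) :=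
            rowInsert_lt'' b r2 (P ++ [a]) (R'' ++ [c]) (P ++ (a :: (r2 :: (R'' ++ [c])))) (P ++ (a :: (b :: (R'' ++ [c])))) (by simp) (by simp) bndi3 (by omega)
          have bndj1 : ∀ e ∈ (P ++ (rr :: (r2 :: R''))), e < c := by
            intro e he
            simp at he
            rcases he with h | rfl | rfl | h
            · have hx := hP e h; omega
            · omega
            · omega
            · have hx := hRt2 e h; omega
          have j1 : rowInsert c (P ++ (rr :: (r2 :: R''))) = (P ++ (rr :: (r2 :: (R'' ++ [c]))), none) :=
            rowInsert_ge' c (P ++ (rr :: (r2 :: R''))) (P ++ (rr :: (r2 :: (R'' ++ [c])))) (by simp) bndj1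
          have j2 : rowInsert a (P ++ (rr :: (r2 :: (R'' ++ [c])))) = (P ++ (a :: (r2 :: (R'' ++ [c]))), some rr) :=
            rowInsert_lt'' a rr (P) (r2 :: (R'' ++ [c])) (P ++ (rr :: (r2 :: (R'' ++ [c])))) (P ++ (a :: (r2 :: (R'' ++ [c])))) (by simp) (by simp) (fun e he => by have hx := hP e he; omega) (by omega)
          have bndj3 : ∀ e ∈ (P ++ [a]), e < b := by
            intro e he
            simp at he
            rcases he with h | rfl
            · have hx := hP e h; omega
            · omega
          have j3 : rowInsert b (P ++ (a :: (r2 :: (R'' ++ [c])))) = (P ++ (a :: (b :: (R'' ++ [c]))), some r2) :=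
            rowInsert_lt'' b r2 (P ++ [a]) (R'' ++ [c]) (P ++ (a :: (r2 :: (R'' ++ [c])))) (P ++ (a :: (b :: (R'' ++ [c])))) (by simp) (by simp) bndj3 (by omega)
          have EL : rowPass (P ++ (rr :: (r2 :: R''))) [a, c, b] = (P ++ (a :: (b :: (R'' ++ [c]))), [rr, r2]) := by
              rw [rowPass3 (h1 := i1) (h2 := i2) (h3 := i3)]
              rfl
          have ER : rowPass (P ++ (rr :: (r2 :: R''))) [c, a, b] = (P ++ (a :: (b :: (R'' ++ [c]))), [rr, r2]) := by
              rw [rowPass3 (h1 := j1) (h2 := j2) (h3 := j3)]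
              rfl
          rw [EL, ER]
          exact ⟨rfl, Or.inl rfl, by simp; omega, by intro e he; simp at he; rcases he with rfl | rfl <;> simp⟩
      · rcases R' with _ | ⟨r2, R''⟩
        · simp only [List.nil_append, List.append_nil, List.cons_append, List.append_assoc] at hsp ⊢
          have hhrr := hR rr (by simp)
          have hhs := hS s (by simp)
          have hSt : ∀ e ∈ S', c < e := fun e he => hS e (by simp [he])
          have i1 : rowInsert a (P ++ (rr :: (s :: S'))) = (P ++ (a :: (s :: S')), some rr) :=
            rowInsert_lt'' a rr (P) (s :: S') (P ++ (rr :: (s :: S'))) (P ++ (a :: (s :: S'))) (by simp) (by simp) (fun e he => by have hx := hP e he; omega) (by omega)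
          have bndi2 : ∀ e ∈ (P ++ [a]), e < c := by
            intro e he
            simp at he
            rcases he with h | rfl
            · have hx := hP e h; omega
            · omega
          have i2 : rowInsert c (P ++ (a :: (s :: S'))) = (P ++ (a :: (c :: S')), some s) :=
            rowInsert_lt'' c s (P ++ [a]) (S') (P ++ (a :: (s :: S'))) (P ++ (a :: (c :: S'))) (by simp) (by simp) bndi2 (by omega)
          have bndi3 : ∀ e ∈ (P ++ [a]), e < b := by
            intro e he
            simp at he
            rcases he with h | rfl
            · have hx := hP e h; omega
            · omega
          have i3 : rowInsert b (P ++ (a :: (c :: S'))) = (P ++ (a :: (b :: S')), some c) :=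
            rowInsert_lt'' b c (P ++ [a]) (S') (P ++ (a :: (c :: S'))) (P ++ (a :: (b :: S'))) (by simp) (by simp) bndi3 (by omega)
          have bndj1 : ∀ e ∈ (P ++ [rr]), e < c := by
            intro e he
            simp at he
            rcases he with h | rfl
            · have hx := hP e h; omega
            · omega
          have j1 : rowInsert c (P ++ (rr :: (s :: S'))) = (P ++ (rr :: (c :: S')), some s) :=
            rowInsert_lt'' c s (P ++ [rr]) (S') (P ++ (rr :: (s :: S'))) (P ++ (rr :: (c :: S'))) (by simp) (by simp) bndj1 (by omega)
          have j2 : rowInsert a (P ++ (rr :: (c :: S'))) = (P ++ (a :: (c :: S')), some rr) :=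
            rowInsert_lt'' a rr (P) (c :: S') (P ++ (rr :: (c :: S'))) (P ++ (a :: (c :: S'))) (by simp) (by simp) (fun e he => by have hx := hP e he; omega) (by omega)
          have bndj3 : ∀ e ∈ (P ++ [a]), e < b := by
            intro e he
            simp at he
            rcases he with h | rfl
            · have hx := hP e h; omega
            · omega
          have j3 : rowInsert b (P ++ (a :: (c :: S'))) = (P ++ (a :: (b :: S')), some c) :=
            rowInsert_lt'' b c (P ++ [a]) (S') (P ++ (a :: (c :: S'))) (P ++ (a :: (b :: S'))) (by simp) (by simp) bndj3 (by omega)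
          have EL : rowPass (P ++ (rr :: (s :: S'))) [a, c, b] = (P ++ (a :: (b :: S')), [rr, s, c]) := by
              rw [rowPass3 (h1 := i1) (h2 := i2) (h3 := i3)]
              rfl
          have ER : rowPass (P ++ (rr :: (s :: S'))) [c, a, b] = (P ++ (a :: (b :: S')), [s, rr, c]) := by
              rw [rowPass3 (h1 := j1) (h2 := j2) (h3 := j3)]
              rfl
          rw [EL, ER]
          exact ⟨rfl, Or.inr ⟨rr, c, s, by omega, by omega, Or.inl ⟨rfl, rfl⟩⟩, by simp; omega, by intro e he; simp at he; rcases he with rfl | rfl | rfl <;> simp⟩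
        · simp only [List.nil_append, List.append_nil, List.cons_append, List.append_assoc] at hsp ⊢
          have hhrr := hR rr (by simp)
          have hhr2 := hR r2 (by simp)
          have hRt2 : ∀ e ∈ R'', b < e ∧ e < c := fun e he => hR e (by simp [he])
          have hhs := hS s (by simp)
          have hSt : ∀ e ∈ S', c < e := fun e he => hS e (by simp [he])
          have hrr2 : rr < r2 := pair_lt P (R'' ++ (s :: S')) rr r2 hsp
          have i1 : rowInsert a (P ++ (rr :: (r2 :: (R'' ++ (s :: S'))))) = (P ++ (a :: (r2 :: (R'' ++ (s :: S')))), some rr) :=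
            rowInsert_lt'' a rr (P) (r2 :: (R'' ++ (s :: S'))) (P ++ (rr :: (r2 :: (R'' ++ (s :: S'))))) (P ++ (a :: (r2 :: (R'' ++ (s :: S'))))) (by simp) (by simp) (fun e he => by have hx := hP e he; omega) (by omega)
          have bndi2 : ∀ e ∈ (P ++ (a :: (r2 :: R''))), e < c := by
            intro e he
            simp at he
            rcases he with h | rfl | rfl | h
            · have hx := hP e h; omega
            · omega
            · omega
            · have hx := hRt2 e h; omega
          have i2 : rowInsert c (P ++ (a :: (r2 :: (R'' ++ (s :: S'))))) = (P ++ (a :: (r2 :: (R'' ++ (c :: S')))), some s) :=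
            rowInsert_lt'' c s (P ++ (a :: (r2 :: R''))) (S') (P ++ (a :: (r2 :: (R'' ++ (s :: S'))))) (P ++ (a :: (r2 :: (R'' ++ (c :: S'))))) (by simp) (by simp) bndi2 (by omega)
          have bndi3 : ∀ e ∈ (P ++ [a]), e < b := by
            intro e he
            simp at he
            rcases he with h | rfl
            · have hx := hP e h; omega
            · omega
          have i3 : rowInsert b (P ++ (a :: (r2 :: (R'' ++ (c :: S'))))) = (P ++ (a :: (b :: (R'' ++ (c :: S')))), some r2) :=
            rowInsert_lt'' b r2 (P ++ [a]) (R'' ++ (c :: S')) (P ++ (a :: (r2 :: (R'' ++ (c :: S'))))) (P ++ (a :: (b :: (R'' ++ (c :: S'))))) (by simp) (by simp) bndi3 (by omega)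
          have bndj1 : ∀ e ∈ (P ++ (rr :: (r2 :: R''))), e < c := by
            intro e he
            simp at he
            rcases he with h | rfl | rfl | h
            · have hx := hP e h; omega
            · omega
            · omega
            · have hx := hRt2 e h; omega
          have j1 : rowInsert c (P ++ (rr :: (r2 :: (R'' ++ (s :: S'))))) = (P ++ (rr :: (r2 :: (R'' ++ (c :: S')))), some s) :=
            rowInsert_lt'' c s (P ++ (rr :: (r2 :: R''))) (S') (P ++ (rr :: (r2 :: (R'' ++ (s :: S'))))) (P ++ (rr :: (r2 :: (R'' ++ (c :: S'))))) (by simp) (by simp) bndj1 (by omega)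
          have j2 : rowInsert a (P ++ (rr :: (r2 :: (R'' ++ (c :: S'))))) = (P ++ (a :: (r2 :: (R'' ++ (c :: S')))), some rr) :=
            rowInsert_lt'' a rr (P) (r2 :: (R'' ++ (c :: S'))) (P ++ (rr :: (r2 :: (R'' ++ (c :: S'))))) (P ++ (a :: (r2 :: (R'' ++ (c :: S'))))) (by simp) (by simp) (fun e he => by have hx := hP e he; omega) (by omega)
          have bndj3 : ∀ e ∈ (P ++ [a]), e < b := by
            intro e he
            simp at he
            rcases he with h | rfl
            · have hx := hP e h; omega
            · omega
          have j3 : rowInsert b (P ++ (a :: (r2 :: (R'' ++ (c :: S'))))) = (P ++ (a :: (b :: (R'' ++ (c :: S')))), some r2) :=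
            rowInsert_lt'' b r2 (P ++ [a]) (R'' ++ (c :: S')) (P ++ (a :: (r2 :: (R'' ++ (c :: S'))))) (P ++ (a :: (b :: (R'' ++ (c :: S'))))) (by simp) (by simp) bndj3 (by omega)
          have EL : rowPass (P ++ (rr :: (r2 :: (R'' ++ (s :: S'))))) [a, c, b] = (P ++ (a :: (b :: (R'' ++ (c :: S')))), [rr, s, r2]) := by
              rw [rowPass3 (h1 := i1) (h2 := i2) (h3 := i3)]
              rfl
          have ER : rowPass (P ++ (rr :: (r2 :: (R'' ++ (s :: S'))))) [c, a, b] = (P ++ (a :: (b :: (R'' ++ (c :: S')))), [s, rr, r2]) := by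
              rw [rowPass3 (h1 := j1) (h2 := j2) (h3 := j3)]
              rfl
          rw [EL, ER]
          exact ⟨rfl, Or.inr ⟨rr, r2, s, by omega, by omega, Or.inl ⟨rfl, rfl⟩⟩, by simp; omega, by intro e he; simp at he; rcases he with rfl | rfl | rfl <;> simp⟩
  · rcases R with _ | ⟨rr, R'⟩
    · rcases S with _ | ⟨s, S'⟩
      · simp only [List.nil_append, List.append_nil, List.cons_append, List.append_assoc] at hsp ⊢
        have hhq := hQ q (by simp)
        have hQt : ∀ e ∈ Q', a < e ∧ e < b := fun e he => hQ e (by simp [he])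
        have i1 : rowInsert a (P ++ (q :: Q')) = (P ++ (a :: Q'), some q) :=
          rowInsert_lt'' a q (P) (Q') (P ++ (q :: Q')) (P ++ (a :: Q')) (by simp) (by simp) (fun e he => by have hx := hP e he; omega) (by omega)
        have bndi2 : ∀ e ∈ (P ++ (a :: Q')), e < c := by
          intro e he
          simp at he
          rcases he with h | rfl | h
          · have hx := hP e h; omega
          · omega
          · have hx := hQt e h; omega
        have i2 : rowInsert c (P ++ (a :: Q')) = (P ++ (a :: (Q' ++ [c])), none) :=
          rowInsert_ge' c (P ++ (a :: Q')) (P ++ (a :: (Q' ++ [c]))) (by simp) bndi2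
        have bndi3 : ∀ e ∈ (P ++ (a :: Q')), e < b := by
          intro e he
          simp at he
          rcases he with h | rfl | h
          · have hx := hP e h; omega
          · omega
          · have hx := hQt e h; omega
        have i3 : rowInsert b (P ++ (a :: (Q' ++ [c]))) = (P ++ (a :: (Q' ++ [b])), some c) :=
          rowInsert_lt'' b c (P ++ (a :: Q')) (([] : List ℕ)) (P ++ (a :: (Q' ++ [c]))) (P ++ (a :: (Q' ++ [b]))) (by simp) (by simp) bndi3 (by omega)
        have bndj1 : ∀ e ∈ (P ++ (q :: Q')), e < c := by
          intro e he
          simp at he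
          rcases he with h | rfl | h
          · have hx := hP e h; omega
          · omega
          · have hx := hQt e h; omega
        have j1 : rowInsert c (P ++ (q :: Q')) = (P ++ (q :: (Q' ++ [c])), none) :=
          rowInsert_ge' c (P ++ (q :: Q')) (P ++ (q :: (Q' ++ [c]))) (by simp) bndj1
        have j2 : rowInsert a (P ++ (q :: (Q' ++ [c]))) = (P ++ (a :: (Q' ++ [c])), some q) :=
          rowInsert_lt'' a q (P) (Q' ++ [c]) (P ++ (q :: (Q' ++ [c]))) (P ++ (a :: (Q' ++ [c]))) (by simp) (by simp) (fun e he => by have hx := hP e he; omega) (by omega)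
        have bndj3 : ∀ e ∈ (P ++ (a :: Q')), e < b := by
          intro e he
          simp at he
          rcases he with h | rfl | h
          · have hx := hP e h; omega
          · omega
          · have hx := hQt e h; omega
        have j3 : rowInsert b (P ++ (a :: (Q' ++ [c]))) = (P ++ (a :: (Q' ++ [b])), some c) :=
          rowInsert_lt'' b c (P ++ (a :: Q')) (([] : List ℕ)) (P ++ (a :: (Q' ++ [c]))) (P ++ (a :: (Q' ++ [b]))) (by simp) (by simp) bndj3 (by omega)
        have EL : rowPass (P ++ (q :: Q')) [a, c, b] = (P ++ (a :: (Q' ++ [b])), [q, c]) := by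
            rw [rowPass3 (h1 := i1) (h2 := i2) (h3 := i3)]
            rfl
        have ER : rowPass (P ++ (q :: Q')) [c, a, b] = (P ++ (a :: (Q' ++ [b])), [q, c]) := by
            rw [rowPass3 (h1 := j1) (h2 := j2) (h3 := j3)]
            rfl
        rw [EL, ER]
        exact ⟨rfl, Or.inl rfl, by simp; omega, by intro e he; simp at he; rcases he with rfl | rfl <;> simp⟩
      · simp only [List.nil_append, List.append_nil, List.cons_append, List.append_assoc] at hsp ⊢
        have hhq := hQ q (by simp)
        have hQt : ∀ e ∈ Q', a < e ∧ e < b := fun e he => hQ e (by simp [he])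
        have hhs := hS s (by simp)
        have hSt : ∀ e ∈ S', c < e := fun e he => hS e (by simp [he])
        have i1 : rowInsert a (P ++ (q :: (Q' ++ (s :: S')))) = (P ++ (a :: (Q' ++ (s :: S'))), some q) :=
          rowInsert_lt'' a q (P) (Q' ++ (s :: S')) (P ++ (q :: (Q' ++ (s :: S')))) (P ++ (a :: (Q' ++ (s :: S')))) (by simp) (by simp) (fun e he => by have hx := hP e he; omega) (by omega)
        have bndi2 : ∀ e ∈ (P ++ (a :: Q')), e < c := by
          intro e he
          simp at he
          rcases he with h | rfl | h
          · have hx := hP e h; omega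
          · omega
          · have hx := hQt e h; omega
        have i2 : rowInsert c (P ++ (a :: (Q' ++ (s :: S')))) = (P ++ (a :: (Q' ++ (c :: S'))), some s) :=
          rowInsert_lt'' c s (P ++ (a :: Q')) (S') (P ++ (a :: (Q' ++ (s :: S')))) (P ++ (a :: (Q' ++ (c :: S')))) (by simp) (by simp) bndi2 (by omega)
        have bndi3 : ∀ e ∈ (P ++ (a :: Q')), e < b := by
          intro e he
          simp at he
          rcases he with h | rfl | h
          · have hx := hP e h; omega
          · omega
          · have hx := hQt e h; omega
        have i3 : rowInsert b (P ++ (a :: (Q' ++ (c :: S')))) = (P ++ (a :: (Q' ++ (b :: S'))), some c) :=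
          rowInsert_lt'' b c (P ++ (a :: Q')) (S') (P ++ (a :: (Q' ++ (c :: S')))) (P ++ (a :: (Q' ++ (b :: S')))) (by simp) (by simp) bndi3 (by omega)
        have bndj1 : ∀ e ∈ (P ++ (q :: Q')), e < c := by
          intro e he
          simp at he
          rcases he with h | rfl | h
          · have hx := hP e h; omega
          · omega
          · have hx := hQt e h; omega
        have j1 : rowInsert c (P ++ (q :: (Q' ++ (s :: S')))) = (P ++ (q :: (Q' ++ (c :: S'))), some s) :=
          rowInsert_lt'' c s (P ++ (q :: Q')) (S') (P ++ (q :: (Q' ++ (s :: S')))) (P ++ (q :: (Q' ++ (c :: S')))) (by simp) (by simp) bndj1 (by omega)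
        have j2 : rowInsert a (P ++ (q :: (Q' ++ (c :: S')))) = (P ++ (a :: (Q' ++ (c :: S'))), some q) :=
          rowInsert_lt'' a q (P) (Q' ++ (c :: S')) (P ++ (q :: (Q' ++ (c :: S')))) (P ++ (a :: (Q' ++ (c :: S')))) (by simp) (by simp) (fun e he => by have hx := hP e he; omega) (by omega)
        have bndj3 : ∀ e ∈ (P ++ (a :: Q')), e < b := by
          intro e he
          simp at he
          rcases he with h | rfl | h
          · have hx := hP e h; omega
          · omega
          · have hx := hQt e h; omega
        have j3 : rowInsert b (P ++ (a :: (Q' ++ (c :: S')))) = (P ++ (a :: (Q' ++ (b :: S'))), some c) :=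
          rowInsert_lt'' b c (P ++ (a :: Q')) (S') (P ++ (a :: (Q' ++ (c :: S')))) (P ++ (a :: (Q' ++ (b :: S')))) (by simp) (by simp) bndj3 (by omega)
        have EL : rowPass (P ++ (q :: (Q' ++ (s :: S')))) [a, c, b] = (P ++ (a :: (Q' ++ (b :: S'))), [q, s, c]) := by
            rw [rowPass3 (h1 := i1) (h2 := i2) (h3 := i3)]
            rfl
        have ER : rowPass (P ++ (q :: (Q' ++ (s :: S')))) [c, a, b] = (P ++ (a :: (Q' ++ (b :: S'))), [s, q, c]) := by
            rw [rowPass3 (h1 := j1) (h2 := j2) (h3 := j3)]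
            rfl
        rw [EL, ER]
        exact ⟨rfl, Or.inr ⟨q, c, s, by omega, by omega, Or.inl ⟨rfl, rfl⟩⟩, by simp; omega, by intro e he; simp at he; rcases he with rfl | rfl | rfl <;> simp⟩
    · rcases S with _ | ⟨s, S'⟩
      · simp only [List.nil_append, List.append_nil, List.cons_append, List.append_assoc] at hsp ⊢
        have hhq := hQ q (by simp)
        have hQt : ∀ e ∈ Q', a < e ∧ e < b := fun e he => hQ e (by simp [he])
        have hhrr := hR rr (by simp)
        have hRt : ∀ e ∈ R', b < e ∧ e < c := fun e he => hR e (by simp [he])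
        have i1 : rowInsert a (P ++ (q :: (Q' ++ (rr :: R')))) = (P ++ (a :: (Q' ++ (rr :: R'))), some q) :=
          rowInsert_lt'' a q (P) (Q' ++ (rr :: R')) (P ++ (q :: (Q' ++ (rr :: R')))) (P ++ (a :: (Q' ++ (rr :: R')))) (by simp) (by simp) (fun e he => by have hx := hP e he; omega) (by omega)
        have bndi2 : ∀ e ∈ (P ++ (a :: (Q' ++ (rr :: R')))), e < c := by
          intro e he
          simp at he
          rcases he with h | rfl | h | rfl | h
          · have hx := hP e h; omega
          · omega
          · have hx := hQt e h; omega
          · omega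
          · have hx := hRt e h; omega
        have i2 : rowInsert c (P ++ (a :: (Q' ++ (rr :: R')))) = (P ++ (a :: (Q' ++ (rr :: (R' ++ [c])))), none) :=
          rowInsert_ge' c (P ++ (a :: (Q' ++ (rr :: R')))) (P ++ (a :: (Q' ++ (rr :: (R' ++ [c]))))) (by simp) bndi2
        have bndi3 : ∀ e ∈ (P ++ (a :: Q')), e < b := by
          intro e he
          simp at he
          rcases he with h | rfl | h
          · have hx := hP e h; omega
          · omega
          · have hx := hQt e h; omega
        have i3 : rowInsert b (P ++ (a :: (Q' ++ (rr :: (R' ++ [c]))))) = (P ++ (a :: (Q' ++ (b :: (R' ++ [c])))), some rr) :=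
          rowInsert_lt'' b rr (P ++ (a :: Q')) (R' ++ [c]) (P ++ (a :: (Q' ++ (rr :: (R' ++ [c]))))) (P ++ (a :: (Q' ++ (b :: (R' ++ [c]))))) (by simp) (by simp) bndi3 (by omega)
        have bndj1 : ∀ e ∈ (P ++ (q :: (Q' ++ (rr :: R')))), e < c := by
          intro e he
          simp at he
          rcases he with h | rfl | h | rfl | h
          · have hx := hP e h; omega
          · omega
          · have hx := hQt e h; omega
          · omega
          · have hx := hRt e h; omega
        have j1 : rowInsert c (P ++ (q :: (Q' ++ (rr :: R')))) = (P ++ (q :: (Q' ++ (rr :: (R' ++ [c])))), none) :=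
          rowInsert_ge' c (P ++ (q :: (Q' ++ (rr :: R')))) (P ++ (q :: (Q' ++ (rr :: (R' ++ [c]))))) (by simp) bndj1
        have j2 : rowInsert a (P ++ (q :: (Q' ++ (rr :: (R' ++ [c]))))) = (P ++ (a :: (Q' ++ (rr :: (R' ++ [c])))), some q) :=
          rowInsert_lt'' a q (P) (Q' ++ (rr :: (R' ++ [c]))) (P ++ (q :: (Q' ++ (rr :: (R' ++ [c]))))) (P ++ (a :: (Q' ++ (rr :: (R' ++ [c]))))) (by simp) (by simp) (fun e he => by have hx := hP e he; omega) (by omega)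
        have bndj3 : ∀ e ∈ (P ++ (a :: Q')), e < b := by
          intro e he
          simp at he
          rcases he with h | rfl | h
          · have hx := hP e h; omega
          · omega
          · have hx := hQt e h; omega
        have j3 : rowInsert b (P ++ (a :: (Q' ++ (rr :: (R' ++ [c]))))) = (P ++ (a :: (Q' ++ (b :: (R' ++ [c])))), some rr) :=
          rowInsert_lt'' b rr (P ++ (a :: Q')) (R' ++ [c]) (P ++ (a :: (Q' ++ (rr :: (R' ++ [c]))))) (P ++ (a :: (Q' ++ (b :: (R' ++ [c]))))) (by simp) (by simp) bndj3 (by omega)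
        have EL : rowPass (P ++ (q :: (Q' ++ (rr :: R')))) [a, c, b] = (P ++ (a :: (Q' ++ (b :: (R' ++ [c])))), [q, rr]) := by
            rw [rowPass3 (h1 := i1) (h2 := i2) (h3 := i3)]
            rfl
        have ER : rowPass (P ++ (q :: (Q' ++ (rr :: R')))) [c, a, b] = (P ++ (a :: (Q' ++ (b :: (R' ++ [c])))), [q, rr]) := by
            rw [rowPass3 (h1 := j1) (h2 := j2) (h3 := j3)]
            rfl
        rw [EL, ER]
        exact ⟨rfl, Or.inl rfl, by simp; omega, by intro e he; simp at he; rcases he with rfl | rfl <;> simp⟩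
      · simp only [List.nil_append, List.append_nil, List.cons_append, List.append_assoc] at hsp ⊢
        have hhq := hQ q (by simp)
        have hQt : ∀ e ∈ Q', a < e ∧ e < b := fun e he => hQ e (by simp [he])
        have hhrr := hR rr (by simp)
        have hRt : ∀ e ∈ R', b < e ∧ e < c := fun e he => hR e (by simp [he])
        have hhs := hS s (by simp)
        have hSt : ∀ e ∈ S', c < e := fun e he => hS e (by simp [he])
        have i1 : rowInsert a (P ++ (q :: (Q' ++ (rr :: (R' ++ (s :: S')))))) = (P ++ (a :: (Q' ++ (rr :: (R' ++ (s :: S'))))), some q) :=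
          rowInsert_lt'' a q (P) (Q' ++ (rr :: (R' ++ (s :: S')))) (P ++ (q :: (Q' ++ (rr :: (R' ++ (s :: S')))))) (P ++ (a :: (Q' ++ (rr :: (R' ++ (s :: S')))))) (by simp) (by simp) (fun e he => by have hx := hP e he; omega) (by omega)
        have bndi2 : ∀ e ∈ (P ++ (a :: (Q' ++ (rr :: R')))), e < c := by
          intro e he
          simp at he
          rcases he with h | rfl | h | rfl | h
          · have hx := hP e h; omega
          · omega
          · have hx := hQt e h; omega
          · omega
          · have hx := hRt e h; omega
        have i2 : rowInsert c (P ++ (a :: (Q' ++ (rr :: (R' ++ (s :: S')))))) = (P ++ (a :: (Q' ++ (rr :: (R' ++ (c :: S'))))), some s) :=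
          rowInsert_lt'' c s (P ++ (a :: (Q' ++ (rr :: R')))) (S') (P ++ (a :: (Q' ++ (rr :: (R' ++ (s :: S')))))) (P ++ (a :: (Q' ++ (rr :: (R' ++ (c :: S')))))) (by simp) (by simp) bndi2 (by omega)
        have bndi3 : ∀ e ∈ (P ++ (a :: Q')), e < b := by
          intro e he
          simp at he
          rcases he with h | rfl | h
          · have hx := hP e h; omega
          · omega
          · have hx := hQt e h; omega
        have i3 : rowInsert b (P ++ (a :: (Q' ++ (rr :: (R' ++ (c :: S')))))) = (P ++ (a :: (Q' ++ (b :: (R' ++ (c :: S'))))), some rr) :=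
          rowInsert_lt'' b rr (P ++ (a :: Q')) (R' ++ (c :: S')) (P ++ (a :: (Q' ++ (rr :: (R' ++ (c :: S')))))) (P ++ (a :: (Q' ++ (b :: (R' ++ (c :: S')))))) (by simp) (by simp) bndi3 (by omega)
        have bndj1 : ∀ e ∈ (P ++ (q :: (Q' ++ (rr :: R')))), e < c := by
          intro e he
          simp at he
          rcases he with h | rfl | h | rfl | h
          · have hx := hP e h; omega
          · omega
          · have hx := hQt e h; omega
          · omega
          · have hx := hRt e h; omega
        have j1 : rowInsert c (P ++ (q :: (Q' ++ (rr :: (R' ++ (s :: S')))))) = (P ++ (q :: (Q' ++ (rr :: (R' ++ (c :: S'))))), some s) :=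
          rowInsert_lt'' c s (P ++ (q :: (Q' ++ (rr :: R')))) (S') (P ++ (q :: (Q' ++ (rr :: (R' ++ (s :: S')))))) (P ++ (q :: (Q' ++ (rr :: (R' ++ (c :: S')))))) (by simp) (by simp) bndj1 (by omega)
        have j2 : rowInsert a (P ++ (q :: (Q' ++ (rr :: (R' ++ (c :: S')))))) = (P ++ (a :: (Q' ++ (rr :: (R' ++ (c :: S'))))), some q) :=
          rowInsert_lt'' a q (P) (Q' ++ (rr :: (R' ++ (c :: S')))) (P ++ (q :: (Q' ++ (rr :: (R' ++ (c :: S')))))) (P ++ (a :: (Q' ++ (rr :: (R' ++ (c :: S')))))) (by simp) (by simp) (fun e he => by have hx := hP e he; omega) (by omega)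
        have bndj3 : ∀ e ∈ (P ++ (a :: Q')), e < b := by
          intro e he
          simp at he
          rcases he with h | rfl | h
          · have hx := hP e h; omega
          · omega
          · have hx := hQt e h; omega
        have j3 : rowInsert b (P ++ (a :: (Q' ++ (rr :: (R' ++ (c :: S')))))) = (P ++ (a :: (Q' ++ (b :: (R' ++ (c :: S'))))), some rr) :=
          rowInsert_lt'' b rr (P ++ (a :: Q')) (R' ++ (c :: S')) (P ++ (a :: (Q' ++ (rr :: (R' ++ (c :: S')))))) (P ++ (a :: (Q' ++ (b :: (R' ++ (c :: S')))))) (by simp) (by simp) bndj3 (by omega)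
        have EL : rowPass (P ++ (q :: (Q' ++ (rr :: (R' ++ (s :: S')))))) [a, c, b] = (P ++ (a :: (Q' ++ (b :: (R' ++ (c :: S'))))), [q, s, rr]) := by
            rw [rowPass3 (h1 := i1) (h2 := i2) (h3 := i3)]
            rfl
        have ER : rowPass (P ++ (q :: (Q' ++ (rr :: (R' ++ (s :: S')))))) [c, a, b] = (P ++ (a :: (Q' ++ (b :: (R' ++ (c :: S'))))), [s, q, rr]) := by
            rw [rowPass3 (h1 := j1) (h2 := j2) (h3 := j3)]
            rfl
        rw [EL, ER]
        exact ⟨rfl, Or.inr ⟨q, rr, s, by omega, by omega, Or.inl ⟨rfl, rfl⟩⟩, by simp; omega, by intro e he; simp at he; rcases he with rfl | rfl | rfl <;> simp⟩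

theorem rowMain2 (r : List ℕ) (a b c : ℕ) (hab : a < b) (hbc : b < c)
    (hsrt : List.Chain' (· < ·) r) (hna : a ∉ r) (hnb : b ∉ r) (hnc : c ∉ r) :
    (rowPass r [b, a, c]).1 = (rowPass r [b, c, a]).1 ∧
    ((rowPass r [b, a, c]).2 = (rowPass r [b, c, a]).2 ∨
      Kpat (rowPass r [b, a, c]).2 (rowPass r [b, c, a]).2) ∧
    (rowPass r [b, a, c]).2.Nodup ∧
    (∀ e ∈ (rowPass r [b, a, c]).2, e ∈ r ∨ e = a ∨ e = b ∨ e = c) := by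
  have hsp : List.Pairwise (· < ·) r := List.isChain_iff_pairwise.mp hsrt
  obtain ⟨P, Q, R, S, hr, hP, hQ, hR, hS⟩ := row_decomp r a b c hsrt hna hnb hnc
  subst hr
  rcases Q with _ | ⟨q, Q'⟩
  · rcases R with _ | ⟨rr, R'⟩
    · rcases S with _ | ⟨s, S'⟩
      · simp only [List.nil_append, List.append_nil, List.cons_append, List.append_assoc] at hsp ⊢
        have i1 : rowInsert b (P) = (P ++ [b], none) :=
          rowInsert_ge' b (P) (P ++ [b]) (by simp) (fun e he => by have hx := hP e he; omega)
        have i2 : rowInsert a (P ++ [b]) = (P ++ [a], some b) :=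
          rowInsert_lt'' a b (P) (([] : List ℕ)) (P ++ [b]) (P ++ [a]) (by simp) (by simp) (fun e he => by have hx := hP e he; omega) (by omega)
        have bndi3 : ∀ e ∈ (P ++ [a]), e < c := by
          intro e he
          simp at he
          rcases he with h | rfl
          · have hx := hP e h; omega
          · omega
        have i3 : rowInsert c (P ++ [a]) = (P ++ [a, c], none) :=
          rowInsert_ge' c (P ++ [a]) (P ++ [a, c]) (by simp) bndi3
        have j1 : rowInsert b (P) = (P ++ [b], none) :=
          rowInsert_ge' b (P) (P ++ [b]) (by simp) (fun e he => by have hx := hP e he; omega)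
        have bndj2 : ∀ e ∈ (P ++ [b]), e < c := by
          intro e he
          simp at he
          rcases he with h | rfl
          · have hx := hP e h; omega
          · omega
        have j2 : rowInsert c (P ++ [b]) = (P ++ [b, c], none) :=
          rowInsert_ge' c (P ++ [b]) (P ++ [b, c]) (by simp) bndj2
        have j3 : rowInsert a (P ++ [b, c]) = (P ++ [a, c], some b) :=
          rowInsert_lt'' a b (P) ([c]) (P ++ [b, c]) (P ++ [a, c]) (by simp) (by simp) (fun e he => by have hx := hP e he; omega) (by omega)
        have EL : rowPass (P) [b, a, c] = (P ++ [a, c], [b]) := by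
            rw [rowPass3 (h1 := i1) (h2 := i2) (h3 := i3)]
            rfl
        have ER : rowPass (P) [b, c, a] = (P ++ [a, c], [b]) := by
            rw [rowPass3 (h1 := j1) (h2 := j2) (h3 := j3)]
            rfl
        rw [EL, ER]
        exact ⟨rfl, Or.inl rfl, by simp, by intro e he; simp at he; subst he; simp⟩
      · rcases S' with _ | ⟨s2, S''⟩
        · simp only [List.nil_append, List.append_nil, List.cons_append, List.append_assoc] at hsp ⊢
          have hhs := hS s (by simp)
          have i1 : rowInsert b (P ++ [s]) = (P ++ [b], some s) :=
            rowInsert_lt'' b s (P) (([] : List ℕ)) (P ++ [s]) (P ++ [b]) (by simp) (by simp) (fun e he => by have hx := hP e he; omega) (by omega)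
          have i2 : rowInsert a (P ++ [b]) = (P ++ [a], some b) :=
            rowInsert_lt'' a b (P) (([] : List ℕ)) (P ++ [b]) (P ++ [a]) (by simp) (by simp) (fun e he => by have hx := hP e he; omega) (by omega)
          have bndi3 : ∀ e ∈ (P ++ [a]), e < c := by
            intro e he
            simp at he
            rcases he with h | rfl
            · have hx := hP e h; omega
            · omega
          have i3 : rowInsert c (P ++ [a]) = (P ++ [a, c], none) :=
            rowInsert_ge' c (P ++ [a]) (P ++ [a, c]) (by simp) bndi3
          have j1 : rowInsert b (P ++ [s]) = (P ++ [b], some s) :=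
            rowInsert_lt'' b s (P) (([] : List ℕ)) (P ++ [s]) (P ++ [b]) (by simp) (by simp) (fun e he => by have hx := hP e he; omega) (by omega)
          have bndj2 : ∀ e ∈ (P ++ [b]), e < c := by
            intro e he
            simp at he
            rcases he with h | rfl
            · have hx := hP e h; omega
            · omega
          have j2 : rowInsert c (P ++ [b]) = (P ++ [b, c], none) :=
            rowInsert_ge' c (P ++ [b]) (P ++ [b, c]) (by simp) bndj2
          have j3 : rowInsert a (P ++ [b, c]) = (P ++ [a, c], some b) :=
            rowInsert_lt'' a b (P) ([c]) (P ++ [b, c]) (P ++ [a, c]) (by simp) (by simp) (fun e he => by have hx := hP e he; omega) (by omega)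
          have EL : rowPass (P ++ [s]) [b, a, c] = (P ++ [a, c], [s, b]) := by
              rw [rowPass3 (h1 := i1) (h2 := i2) (h3 := i3)]
              rfl
          have ER : rowPass (P ++ [s]) [b, c, a] = (P ++ [a, c], [s, b]) := by
              rw [rowPass3 (h1 := j1) (h2 := j2) (h3 := j3)]
              rfl
          rw [EL, ER]
          exact ⟨rfl, Or.inl rfl, by simp; omega, by intro e he; simp at he; rcases he with rfl | rfl <;> simp⟩
        · simp only [List.nil_append, List.append_nil, List.cons_append, List.append_assoc] at hsp ⊢
          have hhs := hS s (by simp)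
          have hhs2 := hS s2 (by simp)
          have hss2 : s < s2 := pair_lt P S'' s s2 hsp
          have i1 : rowInsert b (P ++ (s :: (s2 :: S''))) = (P ++ (b :: (s2 :: S'')), some s) :=
            rowInsert_lt'' b s (P) (s2 :: S'') (P ++ (s :: (s2 :: S''))) (P ++ (b :: (s2 :: S''))) (by simp) (by simp) (fun e he => by have hx := hP e he; omega) (by omega)
          have i2 : rowInsert a (P ++ (b :: (s2 :: S''))) = (P ++ (a :: (s2 :: S'')), some b) :=
            rowInsert_lt'' a b (P) (s2 :: S'') (P ++ (b :: (s2 :: S''))) (P ++ (a :: (s2 :: S''))) (by simp) (by simp) (fun e he => by have hx := hP e he; omega) (by omega)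
          have bndi3 : ∀ e ∈ (P ++ [a]), e < c := by
            intro e he
            simp at he
            rcases he with h | rfl
            · have hx := hP e h; omega
            · omega
          have i3 : rowInsert c (P ++ (a :: (s2 :: S''))) = (P ++ (a :: (c :: S'')), some s2) :=
            rowInsert_lt'' c s2 (P ++ [a]) (S'') (P ++ (a :: (s2 :: S''))) (P ++ (a :: (c :: S''))) (by simp) (by simp) bndi3 (by omega)
          have j1 : rowInsert b (P ++ (s :: (s2 :: S''))) = (P ++ (b :: (s2 :: S'')), some s) :=
            rowInsert_lt'' b s (P) (s2 :: S'') (P ++ (s :: (s2 :: S''))) (P ++ (b :: (s2 :: S''))) (by simp) (by simp) (fun e he => by have hx := hP e he; omega) (by omega)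
          have bndj2 : ∀ e ∈ (P ++ [b]), e < c := by
            intro e he
            simp at he
            rcases he with h | rfl
            · have hx := hP e h; omega
            · omega
          have j2 : rowInsert c (P ++ (b :: (s2 :: S''))) = (P ++ (b :: (c :: S'')), some s2) :=
            rowInsert_lt'' c s2 (P ++ [b]) (S'') (P ++ (b :: (s2 :: S''))) (P ++ (b :: (c :: S''))) (by simp) (by simp) bndj2 (by omega)
          have j3 : rowInsert a (P ++ (b :: (c :: S''))) = (P ++ (a :: (c :: S'')), some b) :=
            rowInsert_lt'' a b (P) (c :: S'') (P ++ (b :: (c :: S''))) (P ++ (a :: (c :: S''))) (by simp) (by simp) (fun e he => by have hx := hP e he; omega) (by omega)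
          have EL : rowPass (P ++ (s :: (s2 :: S''))) [b, a, c] = (P ++ (a :: (c :: S'')), [s, b, s2]) := by
              rw [rowPass3 (h1 := i1) (h2 := i2) (h3 := i3)]
              rfl
          have ER : rowPass (P ++ (s :: (s2 :: S''))) [b, c, a] = (P ++ (a :: (c :: S'')), [s, s2, b]) := by
              rw [rowPass3 (h1 := j1) (h2 := j2) (h3 := j3)]
              rfl
          rw [EL, ER]
          exact ⟨rfl, Or.inr ⟨b, s, s2, by omega, by omega, Or.inr (Or.inr (Or.inl ⟨rfl, rfl⟩))⟩, by simp; omega, by intro e he; simp at he; rcases he with rfl | rfl | rfl <;> simp⟩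
    · rcases S with _ | ⟨s, S'⟩
      · simp only [List.nil_append, List.append_nil, List.cons_append, List.append_assoc] at hsp ⊢
        have hhrr := hR rr (by simp)
        have hRt : ∀ e ∈ R', b < e ∧ e < c := fun e he => hR e (by simp [he])
        have i1 : rowInsert b (P ++ (rr :: R')) = (P ++ (b :: R'), some rr) :=
          rowInsert_lt'' b rr (P) (R') (P ++ (rr :: R')) (P ++ (b :: R')) (by simp) (by simp) (fun e he => by have hx := hP e he; omega) (by omega)
        have i2 : rowInsert a (P ++ (b :: R')) = (P ++ (a :: R'), some b) :=
          rowInsert_lt'' a b (P) (R') (P ++ (b :: R')) (P ++ (a :: R')) (by simp) (by simp) (fun e he => by have hx := hP e he; omega) (by omega)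
        have bndi3 : ∀ e ∈ (P ++ (a :: R')), e < c := by
          intro e he
          simp at he
          rcases he with h | rfl | h
          · have hx := hP e h; omega
          · omega
          · have hx := hRt e h; omega
        have i3 : rowInsert c (P ++ (a :: R')) = (P ++ (a :: (R' ++ [c])), none) :=
          rowInsert_ge' c (P ++ (a :: R')) (P ++ (a :: (R' ++ [c]))) (by simp) bndi3
        have j1 : rowInsert b (P ++ (rr :: R')) = (P ++ (b :: R'), some rr) :=
          rowInsert_lt'' b rr (P) (R') (P ++ (rr :: R')) (P ++ (b :: R')) (by simp) (by simp) (fun e he => by have hx := hP e he; omega) (by omega)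
        have bndj2 : ∀ e ∈ (P ++ (b :: R')), e < c := by
          intro e he
          simp at he
          rcases he with h | rfl | h
          · have hx := hP e h; omega
          · omega
          · have hx := hRt e h; omega
        have j2 : rowInsert c (P ++ (b :: R')) = (P ++ (b :: (R' ++ [c])), none) :=
          rowInsert_ge' c (P ++ (b :: R')) (P ++ (b :: (R' ++ [c]))) (by simp) bndj2
        have j3 : rowInsert a (P ++ (b :: (R' ++ [c]))) = (P ++ (a :: (R' ++ [c])), some b) :=
          rowInsert_lt'' a b (P) (R' ++ [c]) (P ++ (b :: (R' ++ [c]))) (P ++ (a :: (R' ++ [c]))) (by simp) (by simp) (fun e he => by have hx := hP e he; omega) (by omega)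
        have EL : rowPass (P ++ (rr :: R')) [b, a, c] = (P ++ (a :: (R' ++ [c])), [rr, b]) := by
            rw [rowPass3 (h1 := i1) (h2 := i2) (h3 := i3)]
            rfl
        have ER : rowPass (P ++ (rr :: R')) [b, c, a] = (P ++ (a :: (R' ++ [c])), [rr, b]) := by
            rw [rowPass3 (h1 := j1) (h2 := j2) (h3 := j3)]
            rfl
        rw [EL, ER]
        exact ⟨rfl, Or.inl rfl, by simp; omega, by intro e he; simp at he; rcases he with rfl | rfl <;> simp⟩
      · simp only [List.nil_append, List.append_nil, List.cons_append, List.append_assoc] at hsp ⊢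
        have hhrr := hR rr (by simp)
        have hRt : ∀ e ∈ R', b < e ∧ e < c := fun e he => hR e (by simp [he])
        have hhs := hS s (by simp)
        have hSt : ∀ e ∈ S', c < e := fun e he => hS e (by simp [he])
        have i1 : rowInsert b (P ++ (rr :: (R' ++ (s :: S')))) = (P ++ (b :: (R' ++ (s :: S'))), some rr) :=
          rowInsert_lt'' b rr (P) (R' ++ (s :: S')) (P ++ (rr :: (R' ++ (s :: S')))) (P ++ (b :: (R' ++ (s :: S')))) (by simp) (by simp) (fun e he => by have hx := hP e he; omega) (by omega)
        have i2 : rowInsert a (P ++ (b :: (R' ++ (s :: S')))) = (P ++ (a :: (R' ++ (s :: S'))), some b) :=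
          rowInsert_lt'' a b (P) (R' ++ (s :: S')) (P ++ (b :: (R' ++ (s :: S')))) (P ++ (a :: (R' ++ (s :: S')))) (by simp) (by simp) (fun e he => by have hx := hP e he; omega) (by omega)
        have bndi3 : ∀ e ∈ (P ++ (a :: R')), e < c := by
          intro e he
          simp at he
          rcases he with h | rfl | h
          · have hx := hP e h; omega
          · omega
          · have hx := hRt e h; omega
        have i3 : rowInsert c (P ++ (a :: (R' ++ (s :: S')))) = (P ++ (a :: (R' ++ (c :: S'))), some s) :=
          rowInsert_lt'' c s (P ++ (a :: R')) (S') (P ++ (a :: (R' ++ (s :: S')))) (P ++ (a :: (R' ++ (c :: S')))) (by simp) (by simp) bndi3 (by omega)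
        have j1 : rowInsert b (P ++ (rr :: (R' ++ (s :: S')))) = (P ++ (b :: (R' ++ (s :: S'))), some rr) :=
          rowInsert_lt'' b rr (P) (R' ++ (s :: S')) (P ++ (rr :: (R' ++ (s :: S')))) (P ++ (b :: (R' ++ (s :: S')))) (by simp) (by simp) (fun e he => by have hx := hP e he; omega) (by omega)
        have bndj2 : ∀ e ∈ (P ++ (b :: R')), e < c := by
          intro e he
          simp at he
          rcases he with h | rfl | h
          · have hx := hP e h; omega
          · omega
          · have hx := hRt e h; omega
        have j2 : rowInsert c (P ++ (b :: (R' ++ (s :: S')))) = (P ++ (b :: (R' ++ (c :: S'))), some s) :=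
          rowInsert_lt'' c s (P ++ (b :: R')) (S') (P ++ (b :: (R' ++ (s :: S')))) (P ++ (b :: (R' ++ (c :: S')))) (by simp) (by simp) bndj2 (by omega)
        have j3 : rowInsert a (P ++ (b :: (R' ++ (c :: S')))) = (P ++ (a :: (R' ++ (c :: S'))), some b) :=
          rowInsert_lt'' a b (P) (R' ++ (c :: S')) (P ++ (b :: (R' ++ (c :: S')))) (P ++ (a :: (R' ++ (c :: S')))) (by simp) (by simp) (fun e he => by have hx := hP e he; omega) (by omega)
        have EL : rowPass (P ++ (rr :: (R' ++ (s :: S')))) [b, a, c] = (P ++ (a :: (R' ++ (c :: S'))), [rr, b, s]) := by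
            rw [rowPass3 (h1 := i1) (h2 := i2) (h3 := i3)]
            rfl
        have ER : rowPass (P ++ (rr :: (R' ++ (s :: S')))) [b, c, a] = (P ++ (a :: (R' ++ (c :: S'))), [rr, s, b]) := by
            rw [rowPass3 (h1 := j1) (h2 := j2) (h3 := j3)]
            rfl
        rw [EL, ER]
        exact ⟨rfl, Or.inr ⟨b, rr, s, by omega, by omega, Or.inr (Or.inr (Or.inl ⟨rfl, rfl⟩))⟩, by simp; omega, by intro e he; simp at he; rcases he with rfl | rfl | rfl <;> simp⟩
  · rcases R with _ | ⟨rr, R'⟩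
    · rcases S with _ | ⟨s, S'⟩
      · simp only [List.nil_append, List.append_nil, List.cons_append, List.append_assoc] at hsp ⊢
        have hhq := hQ q (by simp)
        have hQt : ∀ e ∈ Q', a < e ∧ e < b := fun e he => hQ e (by simp [he])
        have bndi1 : ∀ e ∈ (P ++ (q :: Q')), e < b := by
          intro e he
          simp at he
          rcases he with h | rfl | h
          · have hx := hP e h; omega
          · omega
          · have hx := hQt e h; omega
        have i1 : rowInsert b (P ++ (q :: Q')) = (P ++ (q :: (Q' ++ [b])), none) :=
          rowInsert_ge' b (P ++ (q :: Q')) (P ++ (q :: (Q' ++ [b]))) (by simp) bndi1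
        have i2 : rowInsert a (P ++ (q :: (Q' ++ [b]))) = (P ++ (a :: (Q' ++ [b])), some q) :=
          rowInsert_lt'' a q (P) (Q' ++ [b]) (P ++ (q :: (Q' ++ [b]))) (P ++ (a :: (Q' ++ [b]))) (by simp) (by simp) (fun e he => by have hx := hP e he; omega) (by omega)
        have bndi3 : ∀ e ∈ (P ++ (a :: (Q' ++ [b]))), e < c := by
          intro e he
          simp at he
          rcases he with h | rfl | h | rfl
          · have hx := hP e h; omega
          · omega
          · have hx := hQt e h; omega
          · omega
        have i3 : rowInsert c (P ++ (a :: (Q' ++ [b]))) = (P ++ (a :: (Q' ++ [b, c])), none) :=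
          rowInsert_ge' c (P ++ (a :: (Q' ++ [b]))) (P ++ (a :: (Q' ++ [b, c]))) (by simp) bndi3
        have bndj1 : ∀ e ∈ (P ++ (q :: Q')), e < b := by
          intro e he
          simp at he
          rcases he with h | rfl | h
          · have hx := hP e h; omega
          · omega
          · have hx := hQt e h; omega
        have j1 : rowInsert b (P ++ (q :: Q')) = (P ++ (q :: (Q' ++ [b])), none) :=
          rowInsert_ge' b (P ++ (q :: Q')) (P ++ (q :: (Q' ++ [b]))) (by simp) bndj1
        have bndj2 : ∀ e ∈ (P ++ (q :: (Q' ++ [b]))), e < c := by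
          intro e he
          simp at he
          rcases he with h | rfl | h | rfl
          · have hx := hP e h; omega
          · omega
          · have hx := hQt e h; omega
          · omega
        have j2 : rowInsert c (P ++ (q :: (Q' ++ [b]))) = (P ++ (q :: (Q' ++ [b, c])), none) :=
          rowInsert_ge' c (P ++ (q :: (Q' ++ [b]))) (P ++ (q :: (Q' ++ [b, c]))) (by simp) bndj2
        have j3 : rowInsert a (P ++ (q :: (Q' ++ [b, c]))) = (P ++ (a :: (Q' ++ [b, c])), some q) :=
          rowInsert_lt'' a q (P) (Q' ++ [b, c]) (P ++ (q :: (Q' ++ [b, c]))) (P ++ (a :: (Q' ++ [b, c]))) (by simp) (by simp) (fun e he => by have hx := hP e he; omega) (by omega)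
        have EL : rowPass (P ++ (q :: Q')) [b, a, c] = (P ++ (a :: (Q' ++ [b, c])), [q]) := by
            rw [rowPass3 (h1 := i1) (h2 := i2) (h3 := i3)]
            rfl
        have ER : rowPass (P ++ (q :: Q')) [b, c, a] = (P ++ (a :: (Q' ++ [b, c])), [q]) := by
            rw [rowPass3 (h1 := j1) (h2 := j2) (h3 := j3)]
            rfl
        rw [EL, ER]
        exact ⟨rfl, Or.inl rfl, by simp, by intro e he; simp at he; subst he; simp⟩
      · rcases S' with _ | ⟨s2, S''⟩
        · simp only [List.nil_append, List.append_nil, List.cons_append, List.append_assoc] at hsp ⊢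
          have hhq := hQ q (by simp)
          have hQt : ∀ e ∈ Q', a < e ∧ e < b := fun e he => hQ e (by simp [he])
          have hhs := hS s (by simp)
          have bndi1 : ∀ e ∈ (P ++ (q :: Q')), e < b := by
            intro e he
            simp at he
            rcases he with h | rfl | h
            · have hx := hP e h; omega
            · omega
            · have hx := hQt e h; omega
          have i1 : rowInsert b (P ++ (q :: (Q' ++ [s]))) = (P ++ (q :: (Q' ++ [b])), some s) :=
            rowInsert_lt'' b s (P ++ (q :: Q')) (([] : List ℕ)) (P ++ (q :: (Q' ++ [s]))) (P ++ (q :: (Q' ++ [b]))) (by simp) (by simp) bndi1 (by omega)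
          have i2 : rowInsert a (P ++ (q :: (Q' ++ [b]))) = (P ++ (a :: (Q' ++ [b])), some q) :=
            rowInsert_lt'' a q (P) (Q' ++ [b]) (P ++ (q :: (Q' ++ [b]))) (P ++ (a :: (Q' ++ [b]))) (by simp) (by simp) (fun e he => by have hx := hP e he; omega) (by omega)
          have bndi3 : ∀ e ∈ (P ++ (a :: (Q' ++ [b]))), e < c := by
            intro e he
            simp at he
            rcases he with h | rfl | h | rfl
            · have hx := hP e h; omega
            · omega
            · have hx := hQt e h; omega
            · omega
          have i3 : rowInsert c (P ++ (a :: (Q' ++ [b]))) = (P ++ (a :: (Q' ++ [b, c])), none) :=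
            rowInsert_ge' c (P ++ (a :: (Q' ++ [b]))) (P ++ (a :: (Q' ++ [b, c]))) (by simp) bndi3
          have bndj1 : ∀ e ∈ (P ++ (q :: Q')), e < b := by
            intro e he
            simp at he
            rcases he with h | rfl | h
            · have hx := hP e h; omega
            · omega
            · have hx := hQt e h; omega
          have j1 : rowInsert b (P ++ (q :: (Q' ++ [s]))) = (P ++ (q :: (Q' ++ [b])), some s) :=
            rowInsert_lt'' b s (P ++ (q :: Q')) (([] : List ℕ)) (P ++ (q :: (Q' ++ [s]))) (P ++ (q :: (Q' ++ [b]))) (by simp) (by simp) bndj1 (by omega)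
          have bndj2 : ∀ e ∈ (P ++ (q :: (Q' ++ [b]))), e < c := by
            intro e he
            simp at he
            rcases he with h | rfl | h | rfl
            · have hx := hP e h; omega
            · omega
            · have hx := hQt e h; omega
            · omega
          have j2 : rowInsert c (P ++ (q :: (Q' ++ [b]))) = (P ++ (q :: (Q' ++ [b, c])), none) :=
            rowInsert_ge' c (P ++ (q :: (Q' ++ [b]))) (P ++ (q :: (Q' ++ [b, c]))) (by simp) bndj2
          have j3 : rowInsert a (P ++ (q :: (Q' ++ [b, c]))) = (P ++ (a :: (Q' ++ [b, c])), some q) :=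
            rowInsert_lt'' a q (P) (Q' ++ [b, c]) (P ++ (q :: (Q' ++ [b, c]))) (P ++ (a :: (Q' ++ [b, c]))) (by simp) (by simp) (fun e he => by have hx := hP e he; omega) (by omega)
          have EL : rowPass (P ++ (q :: (Q' ++ [s]))) [b, a, c] = (P ++ (a :: (Q' ++ [b, c])), [s, q]) := by
              rw [rowPass3 (h1 := i1) (h2 := i2) (h3 := i3)]
              rfl
          have ER : rowPass (P ++ (q :: (Q' ++ [s]))) [b, c, a] = (P ++ (a :: (Q' ++ [b, c])), [s, q]) := by
              rw [rowPass3 (h1 := j1) (h2 := j2) (h3 := j3)]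
              rfl
          rw [EL, ER]
          exact ⟨rfl, Or.inl rfl, by simp; omega, by intro e he; simp at he; rcases he with rfl | rfl <;> simp⟩
        · simp only [List.nil_append, List.append_nil, List.cons_append, List.append_assoc] at hsp ⊢
          have hhq := hQ q (by simp)
          have hQt : ∀ e ∈ Q', a < e ∧ e < b := fun e he => hQ e (by simp [he])
          have hhs := hS s (by simp)
          have hhs2 := hS s2 (by simp)
          have hss2 : s < s2 := pair_lt2 P Q' S'' q s s2 hsp
          have bndi1 : ∀ e ∈ (P ++ (q :: Q')), e < b := by
            intro e he
            simp at he
            rcases he with h | rfl | h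
            · have hx := hP e h; omega
            · omega
            · have hx := hQt e h; omega
          have i1 : rowInsert b (P ++ (q :: (Q' ++ (s :: (s2 :: S''))))) = (P ++ (q :: (Q' ++ (b :: (s2 :: S'')))), some s) :=
            rowInsert_lt'' b s (P ++ (q :: Q')) (s2 :: S'') (P ++ (q :: (Q' ++ (s :: (s2 :: S''))))) (P ++ (q :: (Q' ++ (b :: (s2 :: S''))))) (by simp) (by simp) bndi1 (by omega)
          have i2 : rowInsert a (P ++ (q :: (Q' ++ (b :: (s2 :: S''))))) = (P ++ (a :: (Q' ++ (b :: (s2 :: S'')))), some q) :=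
            rowInsert_lt'' a q (P) (Q' ++ (b :: (s2 :: S''))) (P ++ (q :: (Q' ++ (b :: (s2 :: S''))))) (P ++ (a :: (Q' ++ (b :: (s2 :: S''))))) (by simp) (by simp) (fun e he => by have hx := hP e he; omega) (by omega)
          have bndi3 : ∀ e ∈ (P ++ (a :: (Q' ++ [b]))), e < c := by
            intro e he
            simp at he
            rcases he with h | rfl | h | rfl
            · have hx := hP e h; omega
            · omega
            · have hx := hQt e h; omega
            · omega
          have i3 : rowInsert c (P ++ (a :: (Q' ++ (b :: (s2 :: S''))))) = (P ++ (a :: (Q' ++ (b :: (c :: S'')))), some s2) :=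
            rowInsert_lt'' c s2 (P ++ (a :: (Q' ++ [b]))) (S'') (P ++ (a :: (Q' ++ (b :: (s2 :: S''))))) (P ++ (a :: (Q' ++ (b :: (c :: S''))))) (by simp) (by simp) bndi3 (by omega)
          have bndj1 : ∀ e ∈ (P ++ (q :: Q')), e < b := by
            intro e he
            simp at he
            rcases he with h | rfl | h
            · have hx := hP e h; omega
            · omega
            · have hx := hQt e h; omega
          have j1 : rowInsert b (P ++ (q :: (Q' ++ (s :: (s2 :: S''))))) = (P ++ (q :: (Q' ++ (b :: (s2 :: S'')))), some s) :=
            rowInsert_lt'' b s (P ++ (q :: Q')) (s2 :: S'') (P ++ (q :: (Q' ++ (s :: (s2 :: S''))))) (P ++ (q :: (Q' ++ (b :: (s2 :: S''))))) (by simp) (by simp) bndj1 (by omega)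
          have bndj2 : ∀ e ∈ (P ++ (q :: (Q' ++ [b]))), e < c := by
            intro e he
            simp at he
            rcases he with h | rfl | h | rfl
            · have hx := hP e h; omega
            · omega
            · have hx := hQt e h; omega
            · omega
          have j2 : rowInsert c (P ++ (q :: (Q' ++ (b :: (s2 :: S''))))) = (P ++ (q :: (Q' ++ (b :: (c :: S'')))), some s2) :=
            rowInsert_lt'' c s2 (P ++ (q :: (Q' ++ [b]))) (S'') (P ++ (q :: (Q' ++ (b :: (s2 :: S''))))) (P ++ (q :: (Q' ++ (b :: (c :: S''))))) (by simp) (by simp) bndj2 (by omega)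
          have j3 : rowInsert a (P ++ (q :: (Q' ++ (b :: (c :: S''))))) = (P ++ (a :: (Q' ++ (b :: (c :: S'')))), some q) :=
            rowInsert_lt'' a q (P) (Q' ++ (b :: (c :: S''))) (P ++ (q :: (Q' ++ (b :: (c :: S''))))) (P ++ (a :: (Q' ++ (b :: (c :: S''))))) (by simp) (by simp) (fun e he => by have hx := hP e he; omega) (by omega)
          have EL : rowPass (P ++ (q :: (Q' ++ (s :: (s2 :: S''))))) [b, a, c] = (P ++ (a :: (Q' ++ (b :: (c :: S'')))), [s, q, s2]) := by
              rw [rowPass3 (h1 := i1) (h2 := i2) (h3 := i3)]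
              rfl
          have ER : rowPass (P ++ (q :: (Q' ++ (s :: (s2 :: S''))))) [b, c, a] = (P ++ (a :: (Q' ++ (b :: (c :: S'')))), [s, s2, q]) := by
              rw [rowPass3 (h1 := j1) (h2 := j2) (h3 := j3)]
              rfl
          rw [EL, ER]
          exact ⟨rfl, Or.inr ⟨q, s, s2, by omega, by omega, Or.inr (Or.inr (Or.inl ⟨rfl, rfl⟩))⟩, by simp; omega, by intro e he; simp at he; rcases he with rfl | rfl | rfl <;> simp⟩
    · rcases S with _ | ⟨s, S'⟩
      · simp only [List.nil_append, List.append_nil, List.cons_append, List.append_assoc] at hsp ⊢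
        have hhq := hQ q (by simp)
        have hQt : ∀ e ∈ Q', a < e ∧ e < b := fun e he => hQ e (by simp [he])
        have hhrr := hR rr (by simp)
        have hRt : ∀ e ∈ R', b < e ∧ e < c := fun e he => hR e (by simp [he])
        have bndi1 : ∀ e ∈ (P ++ (q :: Q')), e < b := by
          intro e he
          simp at he
          rcases he with h | rfl | h
          · have hx := hP e h; omega
          · omega
          · have hx := hQt e h; omega
        have i1 : rowInsert b (P ++ (q :: (Q' ++ (rr :: R')))) = (P ++ (q :: (Q' ++ (b :: R'))), some rr) :=
          rowInsert_lt'' b rr (P ++ (q :: Q')) (R') (P ++ (q :: (Q' ++ (rr :: R')))) (P ++ (q :: (Q' ++ (b :: R')))) (by simp) (by simp) bndi1 (by omega)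
        have i2 : rowInsert a (P ++ (q :: (Q' ++ (b :: R')))) = (P ++ (a :: (Q' ++ (b :: R'))), some q) :=
          rowInsert_lt'' a q (P) (Q' ++ (b :: R')) (P ++ (q :: (Q' ++ (b :: R')))) (P ++ (a :: (Q' ++ (b :: R')))) (by simp) (by simp) (fun e he => by have hx := hP e he; omega) (by omega)
        have bndi3 : ∀ e ∈ (P ++ (a :: (Q' ++ (b :: R')))), e < c := by
          intro e he
          simp at he
          rcases he with h | rfl | h | rfl | h
          · have hx := hP e h; omega
          · omega
          · have hx := hQt e h; omega
          · omega
          · have hx := hRt e h; omega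
        have i3 : rowInsert c (P ++ (a :: (Q' ++ (b :: R')))) = (P ++ (a :: (Q' ++ (b :: (R' ++ [c])))), none) :=
          rowInsert_ge' c (P ++ (a :: (Q' ++ (b :: R')))) (P ++ (a :: (Q' ++ (b :: (R' ++ [c]))))) (by simp) bndi3
        have bndj1 : ∀ e ∈ (P ++ (q :: Q')), e < b := by
          intro e he
          simp at he
          rcases he with h | rfl | h
          · have hx := hP e h; omega
          · omega
          · have hx := hQt e h; omega
        have j1 : rowInsert b (P ++ (q :: (Q' ++ (rr :: R')))) = (P ++ (q :: (Q' ++ (b :: R'))), some rr) :=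
          rowInsert_lt'' b rr (P ++ (q :: Q')) (R') (P ++ (q :: (Q' ++ (rr :: R')))) (P ++ (q :: (Q' ++ (b :: R')))) (by simp) (by simp) bndj1 (by omega)
        have bndj2 : ∀ e ∈ (P ++ (q :: (Q' ++ (b :: R')))), e < c := by
          intro e he
          simp at he
          rcases he with h | rfl | h | rfl | h
          · have hx := hP e h; omega
          · omega
          · have hx := hQt e h; omega
          · omega
          · have hx := hRt e h; omega
        have j2 : rowInsert c (P ++ (q :: (Q' ++ (b :: R')))) = (P ++ (q :: (Q' ++ (b :: (R' ++ [c])))), none) :=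
          rowInsert_ge' c (P ++ (q :: (Q' ++ (b :: R')))) (P ++ (q :: (Q' ++ (b :: (R' ++ [c]))))) (by simp) bndj2
        have j3 : rowInsert a (P ++ (q :: (Q' ++ (b :: (R' ++ [c]))))) = (P ++ (a :: (Q' ++ (b :: (R' ++ [c])))), some q) :=
          rowInsert_lt'' a q (P) (Q' ++ (b :: (R' ++ [c]))) (P ++ (q :: (Q' ++ (b :: (R' ++ [c]))))) (P ++ (a :: (Q' ++ (b :: (R' ++ [c]))))) (by simp) (by simp) (fun e he => by have hx := hP e he; omega) (by omega)
        have EL : rowPass (P ++ (q :: (Q' ++ (rr :: R')))) [b, a, c] = (P ++ (a :: (Q' ++ (b :: (R' ++ [c])))), [rr, q]) := by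
            rw [rowPass3 (h1 := i1) (h2 := i2) (h3 := i3)]
            rfl
        have ER : rowPass (P ++ (q :: (Q' ++ (rr :: R')))) [b, c, a] = (P ++ (a :: (Q' ++ (b :: (R' ++ [c])))), [rr, q]) := by
            rw [rowPass3 (h1 := j1) (h2 := j2) (h3 := j3)]
            rfl
        rw [EL, ER]
        exact ⟨rfl, Or.inl rfl, by simp; omega, by intro e he; simp at he; rcases he with rfl | rfl <;> simp⟩
      · simp only [List.nil_append, List.append_nil, List.cons_append, List.append_assoc] at hsp ⊢
        have hhq := hQ q (by simp)
        have hQt : ∀ e ∈ Q', a < e ∧ e < b := fun e he => hQ e (by simp [he])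
        have hhrr := hR rr (by simp)
        have hRt : ∀ e ∈ R', b < e ∧ e < c := fun e he => hR e (by simp [he])
        have hhs := hS s (by simp)
        have hSt : ∀ e ∈ S', c < e := fun e he => hS e (by simp [he])
        have bndi1 : ∀ e ∈ (P ++ (q :: Q')), e < b := by
          intro e he
          simp at he
          rcases he with h | rfl | h
          · have hx := hP e h; omega
          · omega
          · have hx := hQt e h; omega
        have i1 : rowInsert b (P ++ (q :: (Q' ++ (rr :: (R' ++ (s :: S')))))) = (P ++ (q :: (Q' ++ (b :: (R' ++ (s :: S'))))), some rr) :=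
          rowInsert_lt'' b rr (P ++ (q :: Q')) (R' ++ (s :: S')) (P ++ (q :: (Q' ++ (rr :: (R' ++ (s :: S')))))) (P ++ (q :: (Q' ++ (b :: (R' ++ (s :: S')))))) (by simp) (by simp) bndi1 (by omega)
        have i2 : rowInsert a (P ++ (q :: (Q' ++ (b :: (R' ++ (s :: S')))))) = (P ++ (a :: (Q' ++ (b :: (R' ++ (s :: S'))))), some q) :=
          rowInsert_lt'' a q (P) (Q' ++ (b :: (R' ++ (s :: S')))) (P ++ (q :: (Q' ++ (b :: (R' ++ (s :: S')))))) (P ++ (a :: (Q' ++ (b :: (R' ++ (s :: S')))))) (by simp) (by simp) (fun e he => by have hx := hP e he; omega) (by omega)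
        have bndi3 : ∀ e ∈ (P ++ (a :: (Q' ++ (b :: R')))), e < c := by
          intro e he
          simp at he
          rcases he with h | rfl | h | rfl | h
          · have hx := hP e h; omega
          · omega
          · have hx := hQt e h; omega
          · omega
          · have hx := hRt e h; omega
        have i3 : rowInsert c (P ++ (a :: (Q' ++ (b :: (R' ++ (s :: S')))))) = (P ++ (a :: (Q' ++ (b :: (R' ++ (c :: S'))))), some s) :=
          rowInsert_lt'' c s (P ++ (a :: (Q' ++ (b :: R')))) (S') (P ++ (a :: (Q' ++ (b :: (R' ++ (s :: S')))))) (P ++ (a :: (Q' ++ (b :: (R' ++ (c :: S')))))) (by simp) (by simp) bndi3 (by omega)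
        have bndj1 : ∀ e ∈ (P ++ (q :: Q')), e < b := by
          intro e he
          simp at he
          rcases he with h | rfl | h
          · have hx := hP e h; omega
          · omega
          · have hx := hQt e h; omega
        have j1 : rowInsert b (P ++ (q :: (Q' ++ (rr :: (R' ++ (s :: S')))))) = (P ++ (q :: (Q' ++ (b :: (R' ++ (s :: S'))))), some rr) :=
          rowInsert_lt'' b rr (P ++ (q :: Q')) (R' ++ (s :: S')) (P ++ (q :: (Q' ++ (rr :: (R' ++ (s :: S')))))) (P ++ (q :: (Q' ++ (b :: (R' ++ (s :: S')))))) (by simp) (by simp) bndj1 (by omega)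
        have bndj2 : ∀ e ∈ (P ++ (q :: (Q' ++ (b :: R')))), e < c := by
          intro e he
          simp at he
          rcases he with h | rfl | h | rfl | h
          · have hx := hP e h; omega
          · omega
          · have hx := hQt e h; omega
          · omega
          · have hx := hRt e h; omega
        have j2 : rowInsert c (P ++ (q :: (Q' ++ (b :: (R' ++ (s :: S')))))) = (P ++ (q :: (Q' ++ (b :: (R' ++ (c :: S'))))), some s) :=
          rowInsert_lt'' c s (P ++ (q :: (Q' ++ (b :: R')))) (S') (P ++ (q :: (Q' ++ (b :: (R' ++ (s :: S')))))) (P ++ (q :: (Q' ++ (b :: (R' ++ (c :: S')))))) (by simp) (by simp) bndj2 (by omega)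
        have j3 : rowInsert a (P ++ (q :: (Q' ++ (b :: (R' ++ (c :: S')))))) = (P ++ (a :: (Q' ++ (b :: (R' ++ (c :: S'))))), some q) :=
          rowInsert_lt'' a q (P) (Q' ++ (b :: (R' ++ (c :: S')))) (P ++ (q :: (Q' ++ (b :: (R' ++ (c :: S')))))) (P ++ (a :: (Q' ++ (b :: (R' ++ (c :: S')))))) (by simp) (by simp) (fun e he => by have hx := hP e he; omega) (by omega)
        have EL : rowPass (P ++ (q :: (Q' ++ (rr :: (R' ++ (s :: S')))))) [b, a, c] = (P ++ (a :: (Q' ++ (b :: (R' ++ (c :: S'))))), [rr, q, s]) := by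
            rw [rowPass3 (h1 := i1) (h2 := i2) (h3 := i3)]
            rfl
        have ER : rowPass (P ++ (q :: (Q' ++ (rr :: (R' ++ (s :: S')))))) [b, c, a] = (P ++ (a :: (Q' ++ (b :: (R' ++ (c :: S'))))), [rr, s, q]) := by
            rw [rowPass3 (h1 := j1) (h2 := j2) (h3 := j3)]
            rfl
        rw [EL, ER]
        exact ⟨rfl, Or.inr ⟨q, rr, s, by omega, by omega, Or.inr (Or.inr (Or.inl ⟨rfl, rfl⟩))⟩, by simp; omega, by intro e he; simp at he; rcases he with rfl | rfl | rfl <;> simp⟩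

-- ===== Part 5: insertion invariance under Knuth moves =====

theorem Kpat_perm {L1 L2 : List ℕ} (h : Kpat L1 L2) : L1.Perm L2 := by
  obtain ⟨a, b, c, h1, h2, hd⟩ := h
  rcases hd with ⟨rfl, rfl⟩ | ⟨rfl, rfl⟩ | ⟨rfl, rfl⟩ | ⟨rfl, rfl⟩
  · exact List.Perm.swap c a [b]
  · exact List.Perm.swap a c [b]
  · exact (List.Perm.swap c a []).cons b
  · exact (List.Perm.swap a c []).cons b

theorem Kpat_symm {L1 L2 : List ℕ} (h : Kpat L1 L2) : Kpat L2 L1 := by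
  obtain ⟨a, b, c, h1, h2, hd⟩ := h
  rcases hd with ⟨rfl, rfl⟩ | ⟨rfl, rfl⟩ | ⟨rfl, rfl⟩ | ⟨rfl, rfl⟩
  · exact ⟨a, b, c, h1, h2, Or.inr (Or.inl ⟨rfl, rfl⟩)⟩
  · exact ⟨a, b, c, h1, h2, Or.inl ⟨rfl, rfl⟩⟩
  · exact ⟨a, b, c, h1, h2, Or.inr (Or.inr (Or.inr ⟨rfl, rfl⟩))⟩
  · exact ⟨a, b, c, h1, h2, Or.inr (Or.inr (Or.inl ⟨rfl, rfl⟩))⟩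

theorem foldl_base1 (a b c : ℕ) (h1 : a < b) (h2 : b < c) :
    List.foldl insertTab [] [a, c, b] = [[a, b], [c]] := by
  have s2 : rowInsert c [a] = ([a, c], none) :=
    rowInsert_ge' c [a] [a, c] (by simp) (by intro e he; simp at he; omega)
  have s3 : rowInsert b [a, c] = ([a, b], some c) :=
    rowInsert_lt'' b c [a] ([] : List ℕ) [a, c] [a, b] (by simp) (by simp)
      (by intro e he; simp at he; omega) h2
  rw [List.foldl_cons, List.foldl_cons, List.foldl_cons, List.foldl_nil,
    insertTab_nil, insertTab_eq_none s2, insertTab_eq_some s3, insertTab_nil]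

theorem foldl_base2 (a b c : ℕ) (h1 : a < b) (h2 : b < c) :
    List.foldl insertTab [] [c, a, b] = [[a, b], [c]] := by
  have s2 : rowInsert a [c] = ([a], some c) :=
    rowInsert_lt'' a c ([] : List ℕ) ([] : List ℕ) [c] [a] (by simp) (by simp)
      (by simp) (by omega)
  have s3 : rowInsert b [a] = ([a, b], none) :=
    rowInsert_ge' b [a] [a, b] (by simp) (by intro e he; simp at he; omega)
  rw [List.foldl_cons, List.foldl_cons, List.foldl_cons, List.foldl_nil,
    insertTab_nil, insertTab_eq_some s2, insertTab_nil, insertTab_eq_none s3]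

theorem foldl_base3 (a b c : ℕ) (h1 : a < b) (h2 : b < c) :
    List.foldl insertTab [] [b, a, c] = [[a, c], [b]] := by
  have s2 : rowInsert a [b] = ([a], some b) :=
    rowInsert_lt'' a b ([] : List ℕ) ([] : List ℕ) [b] [a] (by simp) (by simp)
      (by simp) h1
  have s3 : rowInsert c [a] = ([a, c], none) :=
    rowInsert_ge' c [a] [a, c] (by simp) (by intro e he; simp at he; omega)
  rw [List.foldl_cons, List.foldl_cons, List.foldl_cons, List.foldl_nil,
    insertTab_nil, insertTab_eq_some s2, insertTab_nil, insertTab_eq_none s3]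

theorem foldl_base4 (a b c : ℕ) (h1 : a < b) (h2 : b < c) :
    List.foldl insertTab [] [b, c, a] = [[a, c], [b]] := by
  have s2 : rowInsert c [b] = ([b, c], none) :=
    rowInsert_ge' c [b] [b, c] (by simp) (by intro e he; simp at he; omega)
  have s3 : rowInsert a [b, c] = ([a, c], some b) :=
    rowInsert_lt'' a b ([] : List ℕ) [c] [b, c] [a, c] (by simp) (by simp)
      (by simp) h1
  rw [List.foldl_cons, List.foldl_cons, List.foldl_cons, List.foldl_nil,
    insertTab_nil, insertTab_eq_none s2, insertTab_eq_some s3, insertTab_nil]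

theorem tabKey (T : List (List ℕ)) : ∀ L1 L2 : List ℕ, GoodT T → Kpat L1 L2 →
    L1.Nodup → (∀ e ∈ L1, e ∉ T.flatten) →
    List.foldl insertTab T L1 = List.foldl insertTab T L2 := by
  induction T with
  | nil =>
    intro L1 L2 _ hK _ _
    obtain ⟨a, b, c, h1, h2, hd⟩ := hK
    rcases hd with ⟨rfl, rfl⟩ | ⟨rfl, rfl⟩ | ⟨rfl, rfl⟩ | ⟨rfl, rfl⟩
    · rw [foldl_base1 a b c h1 h2, foldl_base2 a b c h1 h2]
    · rw [foldl_base1 a b c h1 h2, foldl_base2 a b c h1 h2]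
    · rw [foldl_base3 a b c h1 h2, foldl_base4 a b c h1 h2]
    · rw [foldl_base3 a b c h1 h2, foldl_base4 a b c h1 h2]
  | cons r rs ih =>
    intro L1 L2 hG hK hnd hdisj
    have hrrow : List.Chain' (· < ·) r := hG.1 r (by simp)
    have hGrs : GoodT rs := by
      refine ⟨fun row hrow => hG.1 row (by simp [hrow]), ?_⟩
      have := hG.2
      rw [List.flatten_cons, List.nodup_append] at this
      exact this.2.1
    have hdisjr : ∀ e ∈ r, e ∉ rs.flatten := by
      have := hG.2
      rw [List.flatten_cons, List.nodup_append] at this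
      exact fun e he hb => this.2.2 e he e hb rfl
    obtain ⟨a, b, c, h1, h2, hd⟩ := hK
    have hKnext : ∀ M1 M2 : List ℕ,
        (M1 = M2 ∨ Kpat M1 M2) → M1.Nodup →
        (∀ e ∈ M1, e ∈ r ∨ e = a ∨ e = b ∨ e = c) →
        (a ∉ rs.flatten) → (b ∉ rs.flatten) → (c ∉ rs.flatten) →
        List.foldl insertTab rs M1 = List.foldl insertTab rs M2 := by
      intro M1 M2 hor hndM hmem hra hrb hrc
      rcases hor with rfl | hKM
      · rfl
      · refine ih M1 M2 hGrs hKM hndM ?_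
        intro e he
        rcases hmem e he with hm | rfl | rfl | rfl
        · exact hdisjr e hm
        · exact hra
        · exact hrb
        · exact hrc
    rcases hd with ⟨rfl, rfl⟩ | ⟨rfl, rfl⟩ | ⟨rfl, rfl⟩ | ⟨rfl, rfl⟩
    · -- L1 = [a,c,b], L2 = [c,a,b]
      have hna : a ∉ r := fun h => hdisj a (by simp) (by simp [h])
      have hnb : b ∉ r := fun h => hdisj b (by simp) (by simp [h])
      have hnc : c ∉ r := fun h => hdisj c (by simp) (by simp [h])
      obtain ⟨m1, m2, m3, m4⟩ := rowMain1 r a b c h1 h2 hrrow hna hnb hnc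
      rw [foldl_insertTab_cons, foldl_insertTab_cons, m1,
        hKnext _ _ m2 m3 m4 (fun h => hdisj a (by simp) (by simp [h]))
          (fun h => hdisj b (by simp) (by simp [h]))
          (fun h => hdisj c (by simp) (by simp [h]))]
    · -- L1 = [c,a,b], L2 = [a,c,b]
      have hna : a ∉ r := fun h => hdisj a (by simp) (by simp [h])
      have hnb : b ∉ r := fun h => hdisj b (by simp) (by simp [h])
      have hnc : c ∉ r := fun h => hdisj c (by simp) (by simp [h])
      obtain ⟨m1, m2, m3, m4⟩ := rowMain1 r a b c h1 h2 hrrow hna hnb hnc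
      rw [foldl_insertTab_cons, foldl_insertTab_cons, ← m1,
        ← hKnext _ _ m2 m3 m4 (fun h => hdisj a (by simp) (by simp [h]))
          (fun h => hdisj b (by simp) (by simp [h]))
          (fun h => hdisj c (by simp) (by simp [h]))]
    · -- L1 = [b,a,c], L2 = [b,c,a]
      have hna : a ∉ r := fun h => hdisj a (by simp) (by simp [h])
      have hnb : b ∉ r := fun h => hdisj b (by simp) (by simp [h])
      have hnc : c ∉ r := fun h => hdisj c (by simp) (by simp [h])
      obtain ⟨m1, m2, m3, m4⟩ := rowMain2 r a b c h1 h2 hrrow hna hnb hnc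
      rw [foldl_insertTab_cons, foldl_insertTab_cons, m1,
        hKnext _ _ m2 m3 m4 (fun h => hdisj a (by simp) (by simp [h]))
          (fun h => hdisj b (by simp) (by simp [h]))
          (fun h => hdisj c (by simp) (by simp [h]))]
    · -- L1 = [b,c,a], L2 = [b,a,c]
      have hna : a ∉ r := fun h => hdisj a (by simp) (by simp [h])
      have hnb : b ∉ r := fun h => hdisj b (by simp) (by simp [h])
      have hnc : c ∉ r := fun h => hdisj c (by simp) (by simp [h])
      obtain ⟨m1, m2, m3, m4⟩ := rowMain2 r a b c h1 h2 hrrow hna hnb hnc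
      rw [foldl_insertTab_cons, foldl_insertTab_cons, ← m1,
        ← hKnext _ _ m2 m3 m4 (fun h => hdisj a (by simp) (by simp [h]))
          (fun h => hdisj b (by simp) (by simp [h]))
          (fun h => hdisj c (by simp) (by simp [h]))]

-- ===== Part 6: Knuth equivalence =====

inductive KStep : List ℕ → List ℕ → Prop
  | k1 (u v : List ℕ) (a b c : ℕ) (h1 : a < b) (h2 : b < c) :
      KStep (u ++ ([a, c, b] ++ v)) (u ++ ([c, a, b] ++ v))
  | k2 (u v : List ℕ) (a b c : ℕ) (h1 : a < b) (h2 : b < c) :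
      KStep (u ++ ([b, a, c] ++ v)) (u ++ ([b, c, a] ++ v))

inductive KEq : List ℕ → List ℕ → Prop
  | refl (w : List ℕ) : KEq w w
  | symm {w1 w2 : List ℕ} : KEq w1 w2 → KEq w2 w1
  | trans {w1 w2 w3 : List ℕ} : KEq w1 w2 → KEq w2 w3 → KEq w1 w3
  | step {w1 w2 : List ℕ} : KStep w1 w2 → KEq w1 w2

theorem KStep_perm {w1 w2 : List ℕ} (h : KStep w1 w2) : w1.Perm w2 := by
  cases h with
  | k1 u v a b c h1 h2 =>
    exact List.Perm.append_left u (List.Perm.append_right v (List.Perm.swap c a [b]))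
  | k2 u v a b c h1 h2 =>
    exact List.Perm.append_left u (List.Perm.append_right v ((List.Perm.swap c a []).cons b))

theorem KEq_perm {w1 w2 : List ℕ} (h : KEq w1 w2) : w1.Perm w2 := by
  induction h with
  | refl w => exact List.Perm.refl w
  | symm _ ih => exact ih.symm
  | trans _ _ ih1 ih2 => exact ih1.trans ih2
  | step hs => exact KStep_perm hs

theorem KEq_append_left (u : List ℕ) {w1 w2 : List ℕ} (h : KEq w1 w2) :
    KEq (u ++ w1) (u ++ w2) := by
  induction h with
  | refl w => exact KEq.refl _
  | symm _ ih => exact ih.symm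
  | trans _ _ ih1 ih2 => exact ih1.trans ih2
  | step hs =>
    cases hs with
    | k1 u' v' a b c h1 h2 =>
      have h' := KStep.k1 (u ++ u') v' a b c h1 h2
      rw [List.append_assoc, List.append_assoc] at h'
      exact KEq.step h'
    | k2 u' v' a b c h1 h2 =>
      have h' := KStep.k2 (u ++ u') v' a b c h1 h2
      rw [List.append_assoc, List.append_assoc] at h'
      exact KEq.step h'

theorem KEq_append_right (v : List ℕ) {w1 w2 : List ℕ} (h : KEq w1 w2) :
    KEq (w1 ++ v) (w2 ++ v) := by
  induction h with
  | refl w => exact KEq.refl _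
  | symm _ ih => exact ih.symm
  | trans _ _ ih1 ih2 => exact ih1.trans ih2
  | step hs =>
    cases hs with
    | k1 u' v' a b c h1 h2 =>
      have h' := KStep.k1 u' (v' ++ v) a b c h1 h2
      have e1 : (u' ++ ([a, c, b] ++ v')) ++ v = u' ++ ([a, c, b] ++ (v' ++ v)) := by simp
      have e2 : (u' ++ ([c, a, b] ++ v')) ++ v = u' ++ ([c, a, b] ++ (v' ++ v)) := by simp
      rw [e1, e2]
      exact KEq.step h'
    | k2 u' v' a b c h1 h2 =>
      have h' := KStep.k2 u' (v' ++ v) a b c h1 h2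
      have e1 : (u' ++ ([b, a, c] ++ v')) ++ v = u' ++ ([b, a, c] ++ (v' ++ v)) := by simp
      have e2 : (u' ++ ([b, c, a] ++ v')) ++ v = u' ++ ([b, c, a] ++ (v' ++ v)) := by simp
      rw [e1, e2]
      exact KEq.step h'

theorem Ptab_KStep {w1 w2 : List ℕ} (h : KStep w1 w2) (hnd : w1.Nodup) :
    Ptab w1 = Ptab w2 := by
  cases h with
  | k1 u v a b c h1 h2 =>
    have hu : u.Nodup := (List.nodup_append.1 hnd).1
    have hm : ([a, c, b] : List ℕ).Nodup :=
      (List.nodup_append.1 (List.nodup_append.1 hnd).2.1).1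
    have hdisj : ∀ e ∈ ([a, c, b] : List ℕ), e ∉ u := by
      intro e he hu'
      exact (List.nodup_append.1 hnd).2.2 e hu' e (List.mem_append_left v he) rfl
    obtain ⟨hGu, hPu⟩ := Ptab_spec u hu
    have key := tabKey (Ptab u) [a, c, b] [c, a, b] hGu
      ⟨a, b, c, h1, h2, Or.inl ⟨rfl, rfl⟩⟩ hm
      (fun e he hf => hdisj e he (hPu.mem_iff.1 hf))
    show List.foldl insertTab [] (u ++ ([a, c, b] ++ v)) =
      List.foldl insertTab [] (u ++ ([c, a, b] ++ v))
    rw [List.foldl_append, List.foldl_append, List.foldl_append, List.foldl_append]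
    show List.foldl insertTab (List.foldl insertTab (Ptab u) [a, c, b]) v =
      List.foldl insertTab (List.foldl insertTab (Ptab u) [c, a, b]) v
    rw [key]
  | k2 u v a b c h1 h2 =>
    have hu : u.Nodup := (List.nodup_append.1 hnd).1
    have hm : ([b, a, c] : List ℕ).Nodup :=
      (List.nodup_append.1 (List.nodup_append.1 hnd).2.1).1
    have hdisj : ∀ e ∈ ([b, a, c] : List ℕ), e ∉ u := by
      intro e he hu'
      exact (List.nodup_append.1 hnd).2.2 e hu' e (List.mem_append_left v he) rfl
    obtain ⟨hGu, hPu⟩ := Ptab_spec u hu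
    have key := tabKey (Ptab u) [b, a, c] [b, c, a] hGu
      ⟨a, b, c, h1, h2, Or.inr (Or.inr (Or.inl ⟨rfl, rfl⟩))⟩ hm
      (fun e he hf => hdisj e he (hPu.mem_iff.1 hf))
    show List.foldl insertTab [] (u ++ ([b, a, c] ++ v)) =
      List.foldl insertTab [] (u ++ ([b, c, a] ++ v))
    rw [List.foldl_append, List.foldl_append, List.foldl_append, List.foldl_append]
    show List.foldl insertTab (List.foldl insertTab (Ptab u) [b, a, c]) v =
      List.foldl insertTab (List.foldl insertTab (Ptab u) [b, c, a]) v
    rw [key]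

theorem Ptab_KEq {w1 w2 : List ℕ} (h : KEq w1 w2) (hnd : w1.Nodup) :
    Ptab w1 = Ptab w2 := by
  induction h with
  | refl w => rfl
  | symm h ih => exact (ih ((KEq_perm h).nodup_iff.2 hnd)).symm
  | trans h1 _ ih1 ih2 => exact (ih1 hnd).trans (ih2 ((KEq_perm h1).nodup_iff.1 hnd))
  | step hs => exact Ptab_KStep hs hnd

-- ===== Part 7: word of insertion is Knuth equivalent =====

theorem word_nil : word ([] : List (List ℕ)) = [] := rfl

theorem word_cons (r : List ℕ) (rs : List (List ℕ)) :
    word (r :: rs) = word rs ++ r := by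
  simp [word]

theorem KEq_L1 (y x : ℕ) (C : List ℕ) (hxy : x < y) (hC : ∀ e ∈ C, y < e)
    (hCs : List.Pairwise (· < ·) C) :
    KEq (y :: (C ++ [x])) (y :: (x :: C)) := by
  induction C generalizing y with
  | nil => exact KEq.refl _
  | cons c C' ih =>
    have hyc : y < c := hC c (by simp)
    have hC' : ∀ e ∈ C', c < e := fun e he => (List.pairwise_cons.1 hCs).1 e he
    have IH := ih c (lt_trans hxy hyc) hC' (List.pairwise_cons.1 hCs).2
    have step1 : KEq (y :: (c :: (C' ++ [x]))) (y :: (c :: (x :: C'))) := by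
      have h2 := KEq_append_left [y] IH
      simpa using h2
    have step2 : KEq (y :: (c :: (x :: C'))) (y :: (x :: (c :: C'))) := by
      have h' := KStep.k2 ([] : List ℕ) C' x y c hxy hyc
      simp only [List.nil_append, List.cons_append] at h'
      exact (KEq.step h').symm
    have e1 : y :: ((c :: C') ++ [x]) = y :: (c :: (C' ++ [x])) := by simp
    rw [e1]
    exact step1.trans step2

theorem KEq_L2 (y1 x : ℕ) (A C : List ℕ) (hxy : x < y1) (hA : ∀ e ∈ A, e < x)
    (hAs : List.Pairwise (· < ·) A) :
    KEq (A ++ (y1 :: (x :: C))) (y1 :: (A ++ (x :: C))) := by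
  induction A with
  | nil => exact KEq.refl _
  | cons a A' ih =>
    simp only [List.cons_append]
    have hax : a < x := hA a (by simp)
    have IH := ih (fun e he => hA e (by simp [he])) (List.pairwise_cons.1 hAs).2
    have step1 : KEq (a :: (A' ++ (y1 :: (x :: C)))) (a :: (y1 :: (A' ++ (x :: C)))) := by
      have h2 := KEq_append_left [a] IH
      simpa using h2
    have step2 : KEq (a :: (y1 :: (A' ++ (x :: C)))) (y1 :: (a :: (A' ++ (x :: C)))) := by
      cases A' with
      | nil =>
        simp only [List.nil_append]
        have h' := KStep.k1 ([] : List ℕ) C a x y1 hax hxy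
        simp only [List.nil_append, List.cons_append] at h'
        exact KEq.step h'
      | cons w A'' =>
        simp only [List.cons_append]
        have hwx : w < x := hA w (by simp)
        have haw : a < w := (List.pairwise_cons.1 hAs).1 w (by simp)
        have hwy : w < y1 := lt_trans hwx hxy
        have h' := KStep.k1 ([] : List ℕ) (A'' ++ (x :: C)) a w y1 haw hwy
        simp only [List.nil_append, List.cons_append] at h'
        exact KEq.step h'
    exact step1.trans step2

theorem rowInsert_word_KEq (x y : ℕ) (r r' : List ℕ)
    (hs : List.Chain' (· < ·) r) (hx : x ∉ r) (h : rowInsert x r = (r', some y)) :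
    KEq (r ++ [x]) (y :: r') := by
  obtain ⟨A, C, h1, h2, h3, h4⟩ := rowInsert_some x y r r' h
  subst h1 h2
  simp only [List.Chain', List.isChain_iff_pairwise] at hs
  rw [List.pairwise_append] at hs
  obtain ⟨hAs, hyC, hcross⟩ := hs
  have hAx : ∀ e ∈ A, e < x := by
    intro e he
    have h5 := h3 e he
    have : e ≠ x := fun hh => hx (hh ▸ List.mem_append_left _ he)
    omega
  have hCy : ∀ e ∈ C, y < e := fun e he => (List.pairwise_cons.1 hyC).1 e he
  have hCs : List.Pairwise (· < ·) C := (List.pairwise_cons.1 hyC).2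
  have e1 : (A ++ y :: C) ++ [x] = A ++ (y :: (C ++ [x])) := by simp
  rw [e1]
  have s1 : KEq (A ++ (y :: (C ++ [x]))) (A ++ (y :: (x :: C))) :=
    KEq_append_left A (KEq_L1 y x C h4 hCy hCs)
  have s2 : KEq (A ++ (y :: (x :: C))) (y :: (A ++ (x :: C))) :=
    KEq_L2 y x A C h4 hAx hAs
  have e2 : y :: (A ++ x :: C) = y :: (A ++ (x :: C)) := rfl
  rw [e2]
  exact s1.trans s2

theorem insertTab_word_KEq (T : List (List ℕ)) (x : ℕ) (hG : GoodT T)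
    (hx : x ∉ T.flatten) : KEq (word (insertTab T x)) (word T ++ [x]) := by
  induction T generalizing x with
  | nil => exact KEq.refl _
  | cons r rs ih =>
    obtain ⟨hrows, hnd⟩ := hG
    have hxr : x ∉ r := fun h => hx (by simp [h])
    have hnd' : (r ++ rs.flatten).Nodup := by simpa using hnd
    have hndf : rs.flatten.Nodup := (List.nodup_append.1 hnd').2.1
    have hdisj : ∀ a ∈ r, a ∉ rs.flatten :=
      fun a ha hb => (List.nodup_append.1 hnd').2.2 a ha a hb rfl
    have hsr : List.Chain' (· < ·) r := hrows r (by simp)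
    match h : rowInsert x r with
    | (r', none) =>
      rw [insertTab_eq_none h, word_cons, word_cons, (rowInsert_none x r r' h).1]
      have e : (word rs ++ r) ++ [x] = word rs ++ (r ++ [x]) := by simp
      rw [e]
      exact KEq.refl _
    | (r', some y) =>
      obtain ⟨hs1, hs2, hs3⟩ := rowInsert_spec x r hsr hxr
      rw [h] at hs2 hs3
      simp only [Option.toList] at hs2
      have hxy : x < y := hs3 y rfl
      have hyr : y ∈ r := by
        have h6 : y ∈ x :: r := hs2.mem_iff.1 (by simp)
        rcases List.mem_cons.1 h6 with rfl | hm
        · omega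
        · exact hm
      have hyf : y ∉ rs.flatten := hdisj y hyr
      have IH := ih y ⟨fun row hrow => hrows row (by simp [hrow]), hndf⟩ hyf
      rw [insertTab_eq_some h, word_cons, word_cons]
      have s1 : KEq (word (insertTab rs y) ++ r') ((word rs ++ [y]) ++ r') :=
        KEq_append_right r' IH
      have s2 : KEq (word rs ++ (y :: r')) (word rs ++ (r ++ [x])) :=
        KEq_append_left (word rs) (rowInsert_word_KEq x y r r' hsr hxr h).symm
      have e1 : (word rs ++ [y]) ++ r' = word rs ++ (y :: r') := by simp
      have e2 : (word rs ++ r) ++ [x] = word rs ++ (r ++ [x]) := by simp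
      rw [e2]
      rw [e1] at s1
      exact s1.trans s2

theorem Ptab_word_KEq (w : List ℕ) (hw : w.Nodup) : KEq (word (Ptab w)) w := by
  induction w using List.reverseRecOn with
  | nil => exact KEq.refl _
  | append_singleton w x ih =>
    have hw' : w.Nodup := (List.nodup_append.1 hw).1
    have hxw : x ∉ w := fun hm => (List.nodup_append.1 hw).2.2 x hm x (by simp) rfl
    obtain ⟨hG, hP⟩ := Ptab_spec w hw'
    have hx : x ∉ (Ptab w).flatten := fun h => hxw (hP.mem_iff.1 h)
    rw [Ptab_append_singleton]
    exact (insertTab_word_KEq (Ptab w) x hG hx).trans (KEq_append_right [x] (ih hw'))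

-- ===== Part 8: Knuth equivalence under restriction / shifts / reverse complement =====

theorem KEq_filter (lo hi : ℕ) {w1 w2 : List ℕ} (h : KEq w1 w2) :
    KEq (w1.filter (fun x => decide (lo ≤ x ∧ x ≤ hi)))
        (w2.filter (fun x => decide (lo ≤ x ∧ x ≤ hi))) := by
  induction h with
  | refl w => exact KEq.refl _
  | symm _ ih => exact ih.symm
  | trans _ _ ih1 ih2 => exact ih1.trans ih2
  | step hs =>
    cases hs with
    | k1 u v a b c h1 h2 =>
      rw [List.filter_append, List.filter_append, List.filter_append, List.filter_append]
      refine KEq_append_left _ (KEq_append_right _ ?_)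
      by_cases ha : lo ≤ a ∧ a ≤ hi <;> by_cases hb : lo ≤ b ∧ b ≤ hi <;>
        by_cases hc : lo ≤ c ∧ c ≤ hi <;> simp [List.filter_cons, ha, hb, hc]
      all_goals first
      | exact KEq.refl _
      | exact (hb (by omega)).elim
      | (have h' := KStep.k1 ([] : List ℕ) [] a b c h1 h2
         simp only [List.nil_append, List.append_nil] at h'
         exact KEq.step h')
    | k2 u v a b c h1 h2 =>
      rw [List.filter_append, List.filter_append, List.filter_append, List.filter_append]
      refine KEq_append_left _ (KEq_append_right _ ?_)
      by_cases ha : lo ≤ a ∧ a ≤ hi <;> by_cases hb : lo ≤ b ∧ b ≤ hi <;>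
        by_cases hc : lo ≤ c ∧ c ≤ hi <;> simp [List.filter_cons, ha, hb, hc]
      all_goals first
      | exact KEq.refl _
      | exact (hb (by omega)).elim
      | (have h' := KStep.k2 ([] : List ℕ) [] a b c h1 h2
         simp only [List.nil_append, List.append_nil] at h'
         exact KEq.step h')

theorem KEq_map_sub (k : ℕ) {w1 w2 : List ℕ} (h : KEq w1 w2)
    (hb : ∀ e ∈ w1, k < e) :
    KEq (w1.map (fun e => e - k)) (w2.map (fun e => e - k)) := by
  induction h with
  | refl w => exact KEq.refl _
  | symm h ih => exact (ih (fun e he => hb e ((KEq_perm h).mem_iff.1 he))).symm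
  | trans h1 h2 ih1 ih2 =>
    exact (ih1 hb).trans (ih2 (fun e he => hb e ((KEq_perm h1).mem_iff.2 he)))
  | step hs =>
    cases hs with
    | k1 u v a b c h1 h2 =>
      have hbb : ∀ e ∈ u ++ ([a, c, b] ++ v), k < e := hb
      have hka : k < a := hbb a (by simp)
      have h' := KStep.k1 (u.map (fun e => e - k)) (v.map (fun e => e - k))
        (a - k) (b - k) (c - k) (by omega) (by omega)
      simp only [List.map_append, List.map_cons, List.map_nil]
      simpa using KEq.step h'
    | k2 u v a b c h1 h2 =>
      have hbb : ∀ e ∈ u ++ ([b, a, c] ++ v), k < e := hb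
      have hka : k < a := hbb a (by simp)
      have h' := KStep.k2 (u.map (fun e => e - k)) (v.map (fun e => e - k))
        (a - k) (b - k) (c - k) (by omega) (by omega)
      simp only [List.map_append, List.map_cons, List.map_nil]
      simpa using KEq.step h'

theorem KEq_rc (M : ℕ) {w1 w2 : List ℕ} (h : KEq w1 w2)
    (hb : ∀ e ∈ w1, 1 ≤ e ∧ e ≤ M) :
    KEq ((w1.map (fun e => M + 1 - e)).reverse) ((w2.map (fun e => M + 1 - e)).reverse) := by
  induction h with
  | refl w => exact KEq.refl _
  | symm h ih => exact (ih (fun e he => hb e ((KEq_perm h).mem_iff.1 he))).symm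
  | trans h1 h2 ih1 ih2 =>
    exact (ih1 hb).trans (ih2 (fun e he => hb e ((KEq_perm h1).mem_iff.2 he)))
  | step hs =>
    cases hs with
    | k1 u v a b c h1 h2 =>
      have hbb : ∀ e ∈ u ++ ([a, c, b] ++ v), 1 ≤ e ∧ e ≤ M := hb
      have hka := hbb a (by simp)
      have hkc := hbb c (by simp)
      -- images: A = M+1-c < B = M+1-b < C = M+1-a ; rc [a,c,b] = [B, A, C] : k2 pattern
      have h' := KStep.k2 ((v.map (fun e => M + 1 - e)).reverse)
        ((u.map (fun e => M + 1 - e)).reverse)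
        (M + 1 - c) (M + 1 - b) (M + 1 - a) (by omega) (by omega)
      simp only [List.map_append, List.map_cons, List.map_nil, List.reverse_append,
        List.reverse_cons, List.nil_append, List.append_assoc, List.cons_append,
        List.reverse_nil] at h' ⊢
      exact KEq.step h'
    | k2 u v a b c h1 h2 =>
      have hbb : ∀ e ∈ u ++ ([b, a, c] ++ v), 1 ≤ e ∧ e ≤ M := hb
      have hka := hbb a (by simp)
      have hkc := hbb c (by simp)
      have h' := KStep.k1 ((v.map (fun e => M + 1 - e)).reverse)
        ((u.map (fun e => M + 1 - e)).reverse)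
        (M + 1 - c) (M + 1 - b) (M + 1 - a) (by omega) (by omega)
      simp only [List.map_append, List.map_cons, List.map_nil, List.reverse_append,
        List.reverse_cons, List.nil_append, List.append_assoc, List.cons_append,
        List.reverse_nil] at h' ⊢
      exact KEq.step h'

-- ===== Part 9: final assembly =====

theorem filter_range' (lo hi N : ℕ) (h1 : 1 ≤ lo) (h2 : lo ≤ hi) (h3 : hi ≤ N) :
    (List.range' 1 N).filter (fun x => decide (lo ≤ x ∧ x ≤ hi)) =
      List.range' lo (hi + 1 - lo) := by
  have ha := List.range'_append (s := 1) (m := lo - 1) (n := hi + 1 - lo) (step := 1)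
  have e1 : 1 + 1 * (lo - 1) = lo := by omega
  have e2 : (lo - 1) + (hi + 1 - lo) = hi := by omega
  rw [e1, e2] at ha
  have hb := List.range'_append (s := 1) (m := hi) (n := N - hi) (step := 1)
  have e3 : 1 + 1 * hi = hi + 1 := by omega
  have e4 : hi + (N - hi) = N := by omega
  rw [e3, e4] at hb
  rw [← hb, ← ha, List.filter_append, List.filter_append]
  have f1 : (List.range' 1 (lo - 1)).filter (fun x => decide (lo ≤ x ∧ x ≤ hi)) = [] := by
    rw [List.filter_eq_nil_iff]
    intro e he
    rw [List.mem_range'_1] at he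
    simp only [decide_eq_true_eq]
    omega
  have f2 : (List.range' lo (hi + 1 - lo)).filter (fun x => decide (lo ≤ x ∧ x ≤ hi)) =
      List.range' lo (hi + 1 - lo) := by
    rw [List.filter_eq_self]
    intro e he
    rw [List.mem_range'_1] at he
    simp only [decide_eq_true_eq]
    omega
  have f3 : (List.range' (hi + 1) (N - hi)).filter (fun x => decide (lo ≤ x ∧ x ≤ hi)) = [] := by
    rw [List.filter_eq_nil_iff]
    intro e he
    rw [List.mem_range'_1] at he
    simp only [decide_eq_true_eq]
    omega
  rw [f1, f2, f3]
  simp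

theorem map_sub_range' (a M : ℕ) (h1 : 1 ≤ a) :
    (List.range' a M).map (fun x => x - (a - 1)) = List.range' 1 M := by
  rw [List.range'_eq_map_range, List.range'_eq_map_range, List.map_map]
  refine List.map_congr_left ?_
  intro e _
  simp only [Function.comp_apply]
  omega

/-- Lemma: evacuation and restriction.  For a standard tableau
`S` of shape `λ` with `|λ| = N` and all `1 ≤ i ≤ j ≤ N`,
`P(S^{ev}|_{[i,j]} - (i-1)) = P(S|_{[N+1-j, N+1-i]} - (N-j))^{ev}`. -/
theorem statement1 (lam : List ℕ) (S : List (List ℕ))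
    (hlam : IsPartitionL lam) (hS : IsStdTab lam S)
    (i j : ℕ) (hi : 1 ≤ i) (hij : i ≤ j) (hj : j ≤ lam.sum) :
    resP (evacT S) i j = evacT (resP S (lam.sum + 1 - j) (lam.sum + 1 - i)) := by
  obtain ⟨hshape, hperm, hrows, hcol⟩ := hS
  set N := lam.sum with hNdef
  set w : List ℕ := word S with hwdef
  have hwp : w.Perm (List.range' 1 N) := ((List.reverse_perm S).flatten).trans hperm
  have hwnd : w.Nodup := hwp.nodup_iff.2 (List.nodup_range' (s := 1) (n := N))
  have hwmem : ∀ e ∈ w, 1 ≤ e ∧ e ≤ N := by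
    intro e he
    have := hwp.mem_iff.1 he
    rw [List.mem_range'_1] at this
    omega
  have hNS : numEntries S = N := by
    have := hperm.length_eq
    simpa [numEntries] using this
  -- abbreviations
  set a : ℕ := N + 1 - j with hadef
  set b : ℕ := N + 1 - i with hbdef
  have hab : 1 ≤ a ∧ a ≤ b ∧ b ≤ N := by omega
  set M : ℕ := j + 1 - i with hMdef
  set f : ℕ → ℕ := fun x => N + 1 - x with hfdef
  set RCw : List ℕ := (w.map f).reverse with hRCdef
  have hRCnd : RCw.Nodup := by
    rw [hRCdef, List.nodup_reverse]
    refine List.Nodup.map_on ?_ hwnd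
    intro x hx y hy hxy
    have h1 := hwmem x hx
    have h2 := hwmem y hy
    simp only [hfdef] at hxy
    omega
  have hRCmem : ∀ e ∈ RCw, 1 ≤ e ∧ e ≤ N := by
    intro e he
    rw [hRCdef, List.mem_reverse, List.mem_map] at he
    obtain ⟨x, hx, rfl⟩ := he
    have := hwmem x hx
    simp only [hfdef]
    omega
  -- the evacuation tableau
  have hevac : evacT S = Ptab RCw := by
    rw [evacT, hNS]
  -- u : restriction of w to [a, b]
  set u : List ℕ := w.filter (fun x => decide (a ≤ x ∧ x ≤ b)) with hudef
  have hup : u.Perm (List.range' a M) := by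
    have := hwp.filter (fun x => decide (a ≤ x ∧ x ≤ b))
    rw [filter_range' a b N hab.1 hab.2.1 hab.2.2] at this
    have e : b + 1 - a = M := by omega
    rw [e] at this
    exact this
  set u' : List ℕ := u.map (fun x => x - (a - 1)) with hu'def
  have hu'p : u'.Perm (List.range' 1 M) := by
    have := hup.map (fun x => x - (a - 1))
    rwa [map_sub_range' a M hab.1] at this
  have hu'nd : u'.Nodup := hu'p.nodup_iff.2 (List.nodup_range' (s := 1) (n := M))
  have hu'mem : ∀ e ∈ u', 1 ≤ e ∧ e ≤ M := by
    intro e he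
    have := hu'p.mem_iff.1 he
    rw [List.mem_range'_1] at this
    omega
  -- RHS inner tableau
  have hresP : resP S a b = Ptab u' := rfl
  have hnum : numEntries (Ptab u') = M := by
    have h1 := (Ptab_spec u' hu'nd).2.length_eq
    have h2 := hu'p.length_eq
    simp only [numEntries]
    rw [h1, h2]
    simp
  set Tw : List ℕ := word (Ptab u') with hTwdef
  have hTK : KEq Tw u' := Ptab_word_KEq u' hu'nd
  have hTwmem : ∀ e ∈ Tw, 1 ≤ e ∧ e ≤ M := by
    intro e he
    exact hu'mem e ((KEq_perm hTK).mem_iff.1 he)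
  have hTwnd : Tw.Nodup := (KEq_perm hTK).nodup_iff.2 hu'nd
  -- RHS = Ptab (rc_M u')
  have hRHS : evacT (resP S a b) = Ptab ((u'.map (fun x => M + 1 - x)).reverse) := by
    rw [hresP, evacT, hnum, ← hTwdef]
    refine Ptab_KEq (KEq_rc M hTK hTwmem) ?_
    rw [List.nodup_reverse]
    refine List.Nodup.map_on ?_ hTwnd
    intro x hx y hy hxy
    have h1 := hTwmem x hx
    have h2 := hTwmem y hy
    omega
  -- LHS
  have hL0 : KEq (word (Ptab RCw)) RCw := Ptab_word_KEq RCw hRCnd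
  have hL1 : KEq ((word (Ptab RCw)).filter (fun x => decide (i ≤ x ∧ x ≤ j)))
      (RCw.filter (fun x => decide (i ≤ x ∧ x ≤ j))) := KEq_filter i j hL0
  have hLb : ∀ e ∈ (word (Ptab RCw)).filter (fun x => decide (i ≤ x ∧ x ≤ j)), i - 1 < e := by
    intro e he
    rw [List.mem_filter] at he
    have := of_decide_eq_true he.2
    omega
  have hL2 : KEq (((word (Ptab RCw)).filter (fun x => decide (i ≤ x ∧ x ≤ j))).map
        (fun x => x - (i - 1)))
      ((RCw.filter (fun x => decide (i ≤ x ∧ x ≤ j))).map (fun x => x - (i - 1))) :=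
    KEq_map_sub (i - 1) hL1 hLb
  have hLnd : (((word (Ptab RCw)).filter (fun x => decide (i ≤ x ∧ x ≤ j))).map
      (fun x => x - (i - 1))).Nodup := by
    refine List.Nodup.map_on ?_ (List.Nodup.filter _ ((KEq_perm hL0).nodup_iff.2 hRCnd))
    intro x hx y hy hxy
    have h1 : i ≤ x := by
      rw [List.mem_filter] at hx
      have := of_decide_eq_true hx.2
      omega
    have h2 : i ≤ y := by
      rw [List.mem_filter] at hy
      have := of_decide_eq_true hy.2
      omega
    omega
  have hLHS : resP (evacT S) i j =
      Ptab ((RCw.filter (fun x => decide (i ≤ x ∧ x ≤ j))).map (fun x => x - (i - 1))) := by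
    rw [hevac, resP]
    exact Ptab_KEq hL2 hLnd
  -- the two Ptab arguments coincide
  have hkey : (RCw.filter (fun x => decide (i ≤ x ∧ x ≤ j))).map (fun x => x - (i - 1)) =
      (u'.map (fun x => M + 1 - x)).reverse := by
    rw [hRCdef, List.filter_reverse, List.map_reverse, hu'def, List.filter_map,
      List.map_map, List.map_map]
    congr 1
    have hfc : (w.filter ((fun x => decide (i ≤ x ∧ x ≤ j)) ∘ f)) = u := by
      rw [hudef]
      refine List.filter_congr ?_
      intro x hx
      have := hwmem x hx
      simp only [Function.comp_apply, hfdef]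
      rw [decide_eq_decide]
      omega
    rw [hfc]
    refine List.map_congr_left ?_
    intro x hx
    have hxb : a ≤ x ∧ x ≤ b := by
      rw [hudef, List.mem_filter] at hx
      exact of_decide_eq_true hx.2
    simp only [Function.comp_apply, hfdef]
    omega
  rw [hLHS, hkey, hRHS]

end KSS
end

section
/- Let ν be an admissible (λ^t;R^t)-configuration (nonempty RC set). Then for all n ≥ λ^t_k, the vacancy number satisfies P^{(k)}_n(ν) = λ^t_k − λ^t_{k+1}. -/
namespace KSS

/-- A rectangle: `(η, μ)` = (width, height). -/
abbrev Rect := ℕ × ℕ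

/-- Total number of cells of a sequence of rectangles. -/
def sizeR (R : List Rect) : ℕ := (R.map (fun r => r.1 * r.2)).sum

/-- `Q_n(ρ)`: number of cells of the partition `ρ` (a multiset of parts) in the
first `n` columns. -/
def Qn (n : ℕ) (ρ : Multiset ℕ) : ℕ := (ρ.map (fun p => min p n)).sum

/-- `m_n(ρ)`: multiplicity of the part `n` in `ρ`. -/
def mpart (n : ℕ) (ρ : Multiset ℕ) : ℕ := ρ.count n

/-- `ξ^{(k)}(R)`: the partition whose parts are the heights of the rectangles of
`R` of width `k`. -/
def xiR (R : List Rect) (k : ℕ) : Multiset ℕ :=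
  ((R.filter (fun r => r.1 == k)).map Prod.snd : List ℕ)

/-- The vacancy numbers `P^{(k)}_n(ν)` for a configuration `ν` relative to the
rectangle data `R` (convention `ν 0 = ∅`). -/
def vacZ (R : List Rect) (ν : ℕ → Multiset ℕ) (k n : ℕ) : ℤ :=
  (Qn n (ν (k-1)) : ℤ) - 2 * (Qn n (ν k) : ℤ) + (Qn n (ν (k+1)) : ℤ) + (Qn n (xiR R k) : ℤ)

/-- The vacancy number as a natural number. -/
def natVac (R : List Rect) (ν : ℕ → Multiset ℕ) (k n : ℕ) : ℕ := (vacZ R ν k n).toNat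

/-- `Σ_{j>k} λ^t_j = Σ_{p ∈ λ} max(p-k,0)` for a partition `λ` (multiset of parts). -/
def sumTail (lam : Multiset ℕ) (k : ℕ) : ℕ := (lam.map (fun p => p - k)).sum

/-- `λ^t_k`: number of parts of `λ` of size at least `k`. -/
def lamT (lam : Multiset ℕ) (k : ℕ) : ℕ := (lam.filter (fun p => k ≤ p)).card

/-- `ν` is a `(λ^t; R^t)`-configuration:
`|ν^{(k)}| = Σ_{j>k} λ^t_j − Σ_a μ_a max(η_a − k, 0)` for all `k ≥ 1`. -/
def IsConfig (lam : Multiset ℕ) (R : List Rect) (ν : ℕ → Multiset ℕ) : Prop :=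
  ν 0 = 0 ∧ (∀ k, 0 ∉ ν k) ∧
  ∀ k, 1 ≤ k → (ν k).sum + (R.map (fun r => r.2 * (r.1 - k))).sum = sumTail lam k

/-- Admissibility: all vacancy numbers are nonnegative. -/
def Admissible (R : List Rect) (ν : ℕ → Multiset ℕ) : Prop :=
  ∀ k n, 1 ≤ k → 1 ≤ n → 0 ≤ vacZ R ν k n

/-- `J` is a rigging of `ν` relative to `R`: for each `k, n ≥ 1`, `J k n` is the
multiset of labels of the strings of length `n` in the `k`-th rigged partition;
there are `m_n(ν^{(k)})` of them, each between `0` and `P^{(k)}_n(ν)`. -/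
def IsRigging (R : List Rect) (ν : ℕ → Multiset ℕ) (J : ℕ → ℕ → Multiset ℕ) : Prop :=
  (∀ k n, (k = 0 ∨ n = 0) → J k n = 0) ∧
  (∀ k n, 1 ≤ k → 1 ≤ n →
    (J k n).card = mpart n (ν k) ∧ ∀ x ∈ J k n, (x : ℤ) ≤ vacZ R ν k n)

/-- Rigged configuration. -/
def IsRC (lam : Multiset ℕ) (R : List Rect) (ν : ℕ → Multiset ℕ)
    (J : ℕ → ℕ → Multiset ℕ) : Prop :=
  IsConfig lam R ν ∧ Admissible R ν ∧ IsRigging R ν J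

/-- The set `RC(λ^t; R^t)` of rigged configurations. -/
def RCset (lam : Multiset ℕ) (R : List Rect) :
    Set ((ℕ → Multiset ℕ) × (ℕ → ℕ → Multiset ℕ)) :=
  {p | IsRC lam R p.1 p.2}

/-- `α^{(k)}_n`: size of the `n`-th column of `ν^{(k)}`. -/
def alphaC (ν : ℕ → Multiset ℕ) (k n : ℕ) : ℕ := ((ν k).filter (fun p => n ≤ p)).card

/-- `cc(ν) = Σ_{k,n ≥ 1} α^{(k)}_n (α^{(k)}_n − α^{(k+1)}_n)`. -/
noncomputable def ccConf (ν : ℕ → Multiset ℕ) : ℤ :=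
  ∑ᶠ k : ℕ, ∑ᶠ n : ℕ,
    (if 1 ≤ k ∧ 1 ≤ n then
      (alphaC ν k n : ℤ) * ((alphaC ν k n : ℤ) - (alphaC ν (k+1) n : ℤ)) else 0)

/-- `cc(ν,J) = cc(ν) + Σ_{k,n ≥ 1} |J^{(k)}_n|`. -/
noncomputable def ccRC (ν : ℕ → Multiset ℕ) (J : ℕ → ℕ → Multiset ℕ) : ℤ :=
  ccConf ν + ∑ᶠ k : ℕ, ∑ᶠ n : ℕ, ((J k n).sum : ℤ)

/-- There is a singular string of length `n` in the `k`-th rigged partition. -/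
def Singular (R : List Rect) (ν : ℕ → Multiset ℕ) (J : ℕ → ℕ → Multiset ℕ)
    (k n : ℕ) : Prop :=
  1 ≤ n ∧ natVac R ν k n ∈ J k n
lemma Qn_add_sumTail (n : ℕ) (ρ : Multiset ℕ) : Qn n ρ + sumTail ρ n = ρ.sum := by
  unfold Qn sumTail
  rw [← Multiset.sum_map_add]
  conv_rhs => rw [← Multiset.map_id ρ]
  apply congrArg
  apply Multiset.map_congr rfl
  intro p _
  simp only [id]
  omega

lemma lamT_eq_sum (j : ℕ) (ρ : Multiset ℕ) :
    lamT ρ j = (ρ.map (fun p => if j ≤ p then 1 else 0)).sum := by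
  induction ρ using Multiset.induction_on with
  | empty => simp [lamT]
  | cons a s ih =>
    simp only [lamT, Multiset.filter_cons, Multiset.map_cons, Multiset.sum_cons,
      Multiset.card_add] at *
    split_ifs <;> simp_all

lemma sumTail_step (ρ : Multiset ℕ) (j : ℕ) :
    sumTail ρ j = sumTail ρ (j+1) + lamT ρ (j+1) := by
  rw [lamT_eq_sum]
  unfold sumTail
  rw [← Multiset.sum_map_add]
  apply congrArg
  apply Multiset.map_congr rfl
  intro p _
  split_ifs <;> omega

lemma rStep (R : List Rect) (j : ℕ) :
    (R.map (fun r => r.2 * (r.1 - j))).sum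
      = (R.map (fun r => r.2 * (r.1 - (j+1)))).sum
        + (R.map (fun r => if j+1 ≤ r.1 then r.2 else 0)).sum := by
  induction R with
  | nil => simp
  | cons a t ih =>
    simp only [List.map_cons, List.sum_cons]
    have h : a.2 * (a.1 - j) = a.2 * (a.1 - (j+1)) + (if j+1 ≤ a.1 then a.2 else 0) := by
      split_ifs with hc
      · have h2 : a.1 - j = (a.1 - (j+1)) + 1 := by omega
        rw [h2, Nat.mul_add, Nat.mul_one]
      · have h2 : a.1 - j = 0 := by omega
        have h3 : a.1 - (j+1) = 0 := by omega
        rw [h2, h3]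
        simp
    omega

lemma xiR_sum (R : List Rect) (j : ℕ) :
    (xiR R j).sum = (R.map (fun r => if r.1 = j then r.2 else 0)).sum := by
  rw [xiR, Multiset.sum_coe]
  induction R with
  | nil => simp
  | cons a t ih =>
    rw [List.filter_cons]
    by_cases h : a.1 = j
    · simp [h, ih]
    · simp [h, ih]

lemma sStep (R : List Rect) (j : ℕ) :
    (R.map (fun r => if j ≤ r.1 then r.2 else 0)).sum
      = (R.map (fun r => if j+1 ≤ r.1 then r.2 else 0)).sum
        + (R.map (fun r => if r.1 = j then r.2 else 0)).sum := by
  induction R with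
  | nil => simp
  | cons a t ih =>
    simp only [List.map_cons, List.sum_cons]
    have h : (if j ≤ a.1 then a.2 else 0)
        = (if j+1 ≤ a.1 then a.2 else 0) + (if a.1 = j then a.2 else 0) := by
      split_ifs <;> omega
    omega

lemma hNrs_all (lam : Multiset ℕ) (R : List Rect) (ν : ℕ → Multiset ℕ)
    (hsize : lam.sum = sizeR R) (hconf : IsConfig lam R ν) (j : ℕ) :
    (ν j).sum + (R.map (fun r => r.2 * (r.1 - j))).sum = sumTail lam j := by
  rcases j with _ | j
  · have hl : sumTail lam 0 = lam.sum := by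
      unfold sumTail
      conv_rhs => rw [← Multiset.map_id lam]
      apply congrArg; apply Multiset.map_congr rfl; intro p _; simp
    have hr : (R.map (fun r => r.2 * (r.1 - 0))).sum = sizeR R := by
      unfold sizeR
      apply congrArg
      apply List.map_congr_left
      intro r _
      simp [Nat.mul_comm]
    rw [hconf.1, hl, hr, hsize]
    simp
  · exact hconf.2.2 (j+1) (by omega)

lemma vac_eq (lam : Multiset ℕ) (R : List Rect) (ν : ℕ → Multiset ℕ)
    (hsize : lam.sum = sizeR R) (hconf : IsConfig lam R ν) (k n : ℕ) (hk : 1 ≤ k) :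
    vacZ R ν k n = (lamT lam k : ℤ) - (lamT lam (k+1) : ℤ)
      - ((sumTail (ν (k-1)) n : ℤ) - 2 * (sumTail (ν k) n : ℤ)
         + (sumTail (ν (k+1)) n : ℤ) + (sumTail (xiR R k) n : ℤ)) := by
  obtain ⟨m, rfl⟩ : ∃ m, k = m + 1 := ⟨k-1, by omega⟩
  have e1 := Qn_add_sumTail n (ν m)
  have e2 := Qn_add_sumTail n (ν (m+1))
  have e3 := Qn_add_sumTail n (ν (m+1+1))
  have e4 := Qn_add_sumTail n (xiR R (m+1))
  have h1 := sumTail_step lam m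
  have h2 := sumTail_step lam (m+1)
  have h3 := rStep R m
  have h4 := rStep R (m+1)
  have h5 := sStep R (m+1)
  have h6 := hNrs_all lam R ν hsize hconf m
  have h7 := hNrs_all lam R ν hsize hconf (m+1)
  have h8 := hNrs_all lam R ν hsize hconf (m+1+1)
  have h9 := xiR_sum R (m+1)
  unfold vacZ
  simp only [Nat.add_sub_cancel]
  omega

lemma sumTail_zero_of (ρ : Multiset ℕ) (n : ℕ) (h : ∀ p ∈ ρ, p ≤ n) : sumTail ρ n = 0 := by
  unfold sumTail
  apply Multiset.sum_eq_zero
  intro x hx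
  obtain ⟨p, hp, rfl⟩ := Multiset.mem_map.1 hx
  have := h p hp
  omega

lemma mem_le_sumTail (ρ : Multiset ℕ) (n p : ℕ) (hp : p ∈ ρ) : p - n ≤ sumTail ρ n :=
  Multiset.le_sum_of_mem (Multiset.mem_map_of_mem (fun p => p - n) hp)

lemma lamT_anti (ρ : Multiset ℕ) {i j : ℕ} (h : i ≤ j) : lamT ρ j ≤ lamT ρ i :=
  Multiset.card_le_card (Multiset.monotone_filter_right ρ (fun p hp => le_trans h hp))

lemma lamT_big (lam : Multiset ℕ) (j : ℕ) (hj : lam.sum < j) : lamT lam j = 0 := by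
  unfold lamT
  rw [Multiset.card_eq_zero, Multiset.filter_eq_nil]
  intro p hp
  have := Multiset.le_sum_of_mem hp
  omega

lemma sumTail_zero_of_lamT (lam : Multiset ℕ) (j : ℕ) (h : lamT lam (j+1) = 0) :
    sumTail lam j = 0 := by
  apply sumTail_zero_of
  intro p hp
  by_contra hc
  unfold lamT at h
  rw [Multiset.card_eq_zero, Multiset.filter_eq_nil] at h
  have := h p hp
  omega

lemma maxNu (lam : Multiset ℕ) (R : List Rect) (ν : ℕ → Multiset ℕ)
    (hsize : lam.sum = sizeR R) (hconf : IsConfig lam R ν) (hadm : Admissible R ν) :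
    ∀ k, ∀ p ∈ ν k, p ≤ lamT lam (k+1) := by
  have direct : ∀ k, lamT lam (k+1+1) = 0 → ∀ p ∈ ν k, p ≤ lamT lam (k+1) := by
    intro k h0 p hp
    have hs0 : sumTail lam (k+1) = 0 := sumTail_zero_of_lamT lam (k+1) h0
    have h1 := sumTail_step lam k
    have h6 := hNrs_all lam R ν hsize hconf k
    have hps : p ≤ (ν k).sum := Multiset.le_sum_of_mem hp
    omega
  have key : ∀ d k, lam.sum + 3 ≤ k + 2 + d → ∀ p ∈ ν k, p ≤ lamT lam (k+1) := by
    intro d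
    induction d with
    | zero =>
      intro k hk p hp
      exact direct k (lamT_big lam (k+1+1) (by omega)) p hp
    | succ d ih =>
      intro k hk p hp
      by_cases h0 : lamT lam (k+1+1) = 0
      · exact direct k h0 p hp
      · set n := lamT lam (k+1+1) with hn_def
        have hvac := hadm (k+1) n (by omega) (by omega)
        rw [vac_eq lam R ν hsize hconf (k+1) n (by omega)] at hvac
        simp only [Nat.add_sub_cancel] at hvac
        have hz : sumTail (ν (k+1)) n = 0 := by
          apply sumTail_zero_of
          intro q hq
          exact ih (k+1) (by omega) q hq
        have hp' := mem_le_sumTail (ν k) n p hp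
        have hmono := lamT_anti lam (show k+1 ≤ k+1+1 by omega)
        omega
  intro k p hp
  exact key (lam.sum + 3) k (by omega) p hp

lemma maxXi (lam : Multiset ℕ) (R : List Rect) (ν : ℕ → Multiset ℕ)
    (hsize : lam.sum = sizeR R) (hconf : IsConfig lam R ν) (hadm : Admissible R ν)
    (k : ℕ) (hk : 1 ≤ k) : ∀ p ∈ xiR R k, p ≤ lamT lam k := by
  by_cases h0 : lamT lam (k+1) = 0
  · intro p hp
    obtain ⟨m, rfl⟩ : ∃ m, k = m + 1 := ⟨k-1, by omega⟩
    have hps : p ≤ (xiR R (m+1)).sum := Multiset.le_sum_of_mem hp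
    have h9 := xiR_sum R (m+1)
    have h5 := sStep R (m+1)
    have h3 := rStep R m
    have h6 := hNrs_all lam R ν hsize hconf m
    have h1 := sumTail_step lam m
    have hs0 : sumTail lam (m+1) = 0 := sumTail_zero_of_lamT lam (m+1) h0
    omega
  · intro p hp
    set n := lamT lam (k+1) with hn_def
    have hvac := hadm k n hk (by omega)
    rw [vac_eq lam R ν hsize hconf k n hk] at hvac
    have hz : sumTail (ν k) n = 0 := by
      apply sumTail_zero_of
      intro q hq
      exact maxNu lam R ν hsize hconf hadm k q hq
    have hp' := mem_le_sumTail (xiR R k) n p hp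
    have hmono := lamT_anti lam (show k ≤ k+1 by omega)
    omega

/-- stable value of vacancy numbers: for an admissible
`(λ^t;R^t)`-configuration `ν` and all `k ≥ 1` and `n ≥ λ^t_k`,
`P^{(k)}_n(ν) = λ^t_k − λ^t_{k+1}`. -/
theorem statement8 (lam : Multiset ℕ) (R : List Rect) (ν : ℕ → Multiset ℕ)
    (hlam : 0 ∉ lam) (hsize : lam.sum = sizeR R)
    (hconf : IsConfig lam R ν) (hadm : Admissible R ν) :
    ∀ k n, 1 ≤ k → lamT lam k ≤ n →
      vacZ R ν k n = (lamT lam k : ℤ) - (lamT lam (k+1) : ℤ) := by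
  intro k n hk hn
  rw [vac_eq lam R ν hsize hconf k n hk]
  have hmono1 := lamT_anti lam (show k ≤ k+1 by omega)
  have hmono2 := lamT_anti lam (show k ≤ k+1+1 by omega)
  have z1 : sumTail (ν (k-1)) n = 0 := by
    apply sumTail_zero_of
    intro p hp
    have h := maxNu lam R ν hsize hconf hadm (k-1) p hp
    rw [show k-1+1 = k by omega] at h
    omega
  have z2 : sumTail (ν k) n = 0 := by
    apply sumTail_zero_of
    intro p hp
    have h := maxNu lam R ν hsize hconf hadm k p hp
    omega
  have z3 : sumTail (ν (k+1)) n = 0 := by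
    apply sumTail_zero_of
    intro p hp
    have h := maxNu lam R ν hsize hconf hadm (k+1) p hp
    omega
  have z4 : sumTail (xiR R k) n = 0 := by
    apply sumTail_zero_of
    intro p hp
    have h := maxXi lam R ν hsize hconf hadm k hk p hp
    omega
  rw [z1, z2, z3, z4]
  push_cast
  ring

end KSS
end
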